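/- Every indecomposable finite zigzag persistence module V : ZZ|_[s,t] → Vec is isomorphic to an interval module I^[a,b] with s ≤ a ≤ b ≤ t. -/

import Mathlib

open scoped DirectSum

/-- A zigzag persistence module over `F`: vector spaces `V i` for `i : ℤ`, with
structure maps `f i : V i → V (i+1)` and `g i : V i → V (i-1)` at each even index `i`
(so sinks are at odd indices and sources at even indices). -/
structure Zigzag (F : Type) [Field F] : Type 1 where
  V : ℤ → Type
  acg : ∀ i, AddCommGroup (V i)
  mod : ∀ i, Module F (V i)
  f : ∀ i : ℤ, Even i → (V i →ₗ[F] V (i + 1))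
  g : ∀ i : ℤ, Even i → (V i →ₗ[F] V (i - 1))

attribute [instance] Zigzag.acg Zigzag.mod

namespace Zigzag

variable {F : Type} [Field F]

/-- The zero persistence module predicate. -/
def IsZero (M : Zigzag F) : Prop := ∀ i, ∀ x : M.V i, x = 0

/-- `M` vanishes on the index interval `[s,t]`. -/
def VanishesOn (M : Zigzag F) (s t : ℤ) : Prop :=
  ∀ i, s ≤ i → i ≤ t → ∀ x : M.V i, x = 0

/-- An isomorphism of zigzag persistence modules: a family of linear equivalences
commuting with the structure maps. -/
structure Iso (M N : Zigzag F) where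
  e : ∀ i, M.V i ≃ₗ[F] N.V i
  comm_f : ∀ (i : ℤ) (h : Even i) (x : M.V i), e (i + 1) (M.f i h x) = N.f i h (e i x)
  comm_g : ∀ (i : ℤ) (h : Even i) (x : M.V i), e (i - 1) (M.g i h x) = N.g i h (e i x)

/-- A morphism of zigzag persistence modules. -/
structure Hom (M N : Zigzag F) where
  h : ∀ i, M.V i →ₗ[F] N.V i
  comm_f : ∀ (i : ℤ) (hi : Even i) (x : M.V i), h (i + 1) (M.f i hi x) = N.f i hi (h i x)
  comm_g : ∀ (i : ℤ) (hi : Even i) (x : M.V i), h (i - 1) (M.g i hi x) = N.g i hi (h i x)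

/-- Binary (pointwise) direct sum of zigzag persistence modules. -/
def dsum (M N : Zigzag F) : Zigzag F where
  V i := M.V i × N.V i
  acg i := inferInstance
  mod i := inferInstance
  f i h := (M.f i h).prodMap (N.f i h)
  g i h := (M.g i h).prodMap (N.g i h)

/-- `M` is decomposable if it is isomorphic to a direct sum of two non-zero modules. -/
def Decomposable (M : Zigzag F) : Prop :=
  ∃ U W : Zigzag F, Nonempty (Iso M (U.dsum W)) ∧ ¬ U.IsZero ∧ ¬ W.IsZero

/-- `M` is indecomposable: non-zero, and in any decomposition one summand is zero. -/
def Indecomposable (M : Zigzag F) : Prop :=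
  ¬ M.IsZero ∧ ∀ U W : Zigzag F, Iso M (U.dsum W) → U.IsZero ∨ W.IsZero

/-- `M` is `[s,t]`-indecomposable: non-zero, and in any decomposition one summand
vanishes on all indices in `[s,t]`. -/
def IndecOn (M : Zigzag F) (s t : ℤ) : Prop :=
  ¬ M.IsZero ∧ ∀ U W : Zigzag F, Iso M (U.dsum W) → U.VanishesOn s t ∨ W.VanishesOn s t

/-- Direct sum of an arbitrary family of zigzag persistence modules (pointwise). -/
noncomputable def dSum {J : Type} (W : J → Zigzag F) : Zigzag F where
  V i := ⨁ j, (W j).V i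
  acg i := inferInstance
  mod i := inferInstance
  f i h :=
    letI := Classical.decEq J
    DirectSum.toModule F J _ fun j => (DirectSum.lof F J (fun j => (W j).V (i + 1)) j).comp ((W j).f i h)
  g i h :=
    letI := Classical.decEq J
    DirectSum.toModule F J _ fun j => (DirectSum.lof F J (fun j => (W j).V (i - 1)) j).comp ((W j).g i h)

/-- An auxiliary linear map `(PLift P → A) → (PLift Q → B)` induced by `φ : A →ₗ B`:
it is `φ` (under the canonical identifications) when `P` holds, and `0` otherwise. -/
noncomputable def transferMap (F : Type) [Field F] {P Q : Prop} {A B : Type} [AddCommGroup A]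
    [Module F A] [AddCommGroup B] [Module F B] (φ : A →ₗ[F] B) :
    (PLift P → A) →ₗ[F] (PLift Q → B) where
  toFun x := fun _ => letI := Classical.dec P; if hp : P then φ (x ⟨hp⟩) else 0
  map_add' x y := by funext hq; by_cases hp : P <;> simp [hp]
  map_smul' c x := by funext hq; by_cases hp : P <;> simp [hp]

/-- The extended integers `ℤ ∪ {±∞}`. -/
abbrev EInt : Type := WithBot (WithTop ℤ)

/-- Canonical inclusion of `ℤ` into `ℤ ∪ {±∞}`. -/
def toE (i : ℤ) : EInt := ((i : WithTop ℤ) : WithBot (WithTop ℤ))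

/-- Membership of an integer in the extended interval `[a, b]`. -/
def memI (a b : EInt) (i : ℤ) : Prop := a ≤ toE i ∧ toE i ≤ b

/-- The interval zigzag persistence module `I^[a,b]` for `a ≤ b` in `ℤ ∪ {±∞}`:
it is `F` on indices in `[a,b]` and `0` elsewhere, with identity maps between
non-zero spaces. -/
noncomputable def interval (F : Type) [Field F] (a b : EInt) : Zigzag F where
  V i := PLift (memI a b i) → F
  acg i := inferInstance
  mod i := inferInstance
  f i _ := transferMap F LinearMap.id
  g i _ := transferMap F LinearMap.id

/-- The restriction of `M` to the index interval `[s,t]`, realized as the zigzag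
module agreeing with `M` on `[s,t]` and vanishing elsewhere (extension by zero;
this carries exactly the data of the restriction of `M` to the full subcategory
on `{s, …, t}`). -/
noncomputable def restrict (M : Zigzag F) (s t : ℤ) : Zigzag F where
  V i := PLift (s ≤ i ∧ i ≤ t) → M.V i
  acg i := inferInstance
  mod i := inferInstance
  f i h := transferMap F (M.f i h)
  g i h := transferMap F (M.g i h)

end Zigzag




section Prelim
variable {F : Type} [Field F]

/-- Trivial linear equivalence between subsingleton modules. -/
noncomputable def trivEquiv {M N : Type} [AddCommGroup M] [Module F M] [AddCommGroup N] [Module F N]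
    [Subsingleton M] [Subsingleton N] : M ≃ₗ[F] N where
  toFun _ := 0
  map_add' _ _ := Subsingleton.elim _ _
  map_smul' _ _ := Subsingleton.elim _ _
  invFun _ := 0
  left_inv _ := Subsingleton.elim _ _
  right_inv _ := Subsingleton.elim _ _

/-- Replacing one vector of a spanning independent family by itself plus a combination of the
others preserves independence and spanning. -/
lemma li_span_of_eq_add {ι M : Type} [Fintype ι] [DecidableEq ι] [AddCommGroup M] [Module F M]
    (v v' : ι → M) (k0 : ι) (w : M)
    (hli : LinearIndependent F v) (hsp : Submodule.span F (Set.range v) = ⊤)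
    (hw : w ∈ Submodule.span F (v '' {k | k ≠ k0}))
    (h1 : v' k0 = v k0 + w) (h2 : ∀ k, k ≠ k0 → v' k = v k) :
    LinearIndependent F v' ∧ Submodule.span F (Set.range v') = ⊤ := by
  constructor
  · rw [Fintype.linearIndependent_iff]
    intro g hg
    have hsum : ∑ k, g k • v' k = (∑ k, g k • v k) + g k0 • w := by
      have : ∀ k, g k • v' k = g k • v k + (if k = k0 then g k0 • w else 0) := by
        intro k
        by_cases hk : k = k0
        · subst hk; rw [h1, if_pos rfl, smul_add]
        · rw [h2 k hk, if_neg hk, add_zero]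
      rw [Finset.sum_congr rfl (fun k _ => this k), Finset.sum_add_distrib,
        Finset.sum_ite_eq' Finset.univ k0]
      simp
    rw [hsum] at hg
    -- g k0 = 0
    have hk0 : g k0 = 0 := by
      by_contra hne
      have hv : v k0 = (g k0)⁻¹ • (-(∑ k ∈ Finset.univ.erase k0, g k • v k) - g k0 • w) := by
        have : g k0 • v k0 = -(∑ k ∈ Finset.univ.erase k0, g k • v k) - g k0 • w := by
          have := Finset.add_sum_erase Finset.univ (fun k => g k • v k) (Finset.mem_univ k0)
          rw [← this] at hg
          linear_combination (norm := module) hg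
        rw [← this, smul_smul, inv_mul_cancel₀ hne, one_smul]
      have hmem : v k0 ∈ Submodule.span F (v '' {k | k ≠ k0}) := by
        rw [hv]
        refine Submodule.smul_mem _ _ (Submodule.sub_mem _ (Submodule.neg_mem _ ?_)
          (Submodule.smul_mem _ _ hw))
        refine Submodule.sum_mem _ (fun k hk => ?_)
        exact Submodule.smul_mem _ _ (Submodule.subset_span
          ⟨k, Finset.ne_of_mem_erase hk, rfl⟩)
      exact hli.notMem_span_image (by simp : k0 ∉ {k | k ≠ k0}) hmem
    rw [hk0, zero_smul, add_zero] at hg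
    exact fun i => (Fintype.linearIndependent_iff.1 hli) g hg i
  · have himg : v '' {k | k ≠ k0} = v' '' {k | k ≠ k0} := by
      apply Set.image_congr
      intro k hk; exact (h2 k hk).symm
    have hle : ∀ k, v k ∈ Submodule.span F (Set.range v') := by
      intro k
      by_cases hk : k = k0
      · have hvk : v k = v' k - w := by rw [hk, h1]; abel
        rw [hvk]
        refine Submodule.sub_mem _ (Submodule.subset_span ⟨k, rfl⟩) ?_
        refine Submodule.span_mono ?_ (himg ▸ hw)
        exact Set.image_subset_range _ _
      · rw [← h2 k hk]; exact Submodule.subset_span ⟨k, rfl⟩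
    rw [eq_top_iff, ← hsp, Submodule.span_le]
    rintro y ⟨k, rfl⟩
    exact hle k

/-- The allowed-donor relation for twisting interval summands. -/
def Allowed (aj ak : ℤ) : Prop := aj = ak ∨ (aj < ak ∧ Odd ak) ∨ (ak < aj ∧ Even aj)

lemma exists_pivot (A : Finset ℤ) (h : A.Nonempty) : ∃ m ∈ A, ∀ j ∈ A, Allowed j m := by
  by_cases ho : (A.filter (fun z => Odd z)).Nonempty
  · set m := (A.filter (fun z => Odd z)).max' ho with hm
    have hmmem := (A.filter (fun z => Odd z)).max'_mem ho
    rw [Finset.mem_filter] at hmmem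
    refine ⟨m, hmmem.1, fun j hj => ?_⟩
    rcases lt_trichotomy j m with h1 | h1 | h1
    · exact Or.inr (Or.inl ⟨h1, hmmem.2⟩)
    · exact Or.inl h1
    · refine Or.inr (Or.inr ⟨h1, ?_⟩)
      rcases Int.even_or_odd j with he | he
      · exact he
      · exfalso
        have : j ≤ m := Finset.le_max' _ j (Finset.mem_filter.2 ⟨hj, he⟩)
        omega
  · refine ⟨A.min' h, A.min'_mem h, fun j hj => ?_⟩
    rcases eq_or_lt_of_le (A.min'_le j hj) with h1 | h1
    · exact Or.inl h1.symm
    · refine Or.inr (Or.inr ⟨h1, ?_⟩)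
      rcases Int.even_or_odd j with he | he
      · exact he
      · exact absurd ⟨j, Finset.mem_filter.2 ⟨hj, he⟩⟩ ho

end Prelim

section Std
open Zigzag
variable {F : Type} [Field F]

/-- The structure maps act monomially on the generator family `x` with supports `[a k, b k]`. -/
def StdMaps (V : Zigzag F) {ι : Type} (a b : ι → ℤ) (x : ι → ∀ i : ℤ, V.V i) : Prop :=
  ∀ k (i : ℤ) (hi : Even i), a k ≤ i → i ≤ b k →
    (V.f i hi (x k i) = if i + 1 ≤ b k then x k (i+1) else 0) ∧
    (V.g i hi (x k i) = if a k ≤ i - 1 then x k (i-1) else 0)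

/-- At each index in `[s,t]`, the alive generators form a basis. -/
def StdBasis (V : Zigzag F) {ι : Type} (s t : ℤ) (a b : ι → ℤ) (x : ι → ∀ i : ℤ, V.V i) : Prop :=
  ∀ i : ℤ, s ≤ i → i ≤ t →
    LinearIndependent F (fun k : {k : ι // a k ≤ i ∧ i ≤ b k} => x k.1 i) ∧
    Submodule.span F (Set.range (fun k : {k : ι // a k ≤ i ∧ i ≤ b k} => x k.1 i)) = ⊤

variable {V : Zigzag F} {ι : Type} [Fintype ι] [DecidableEq ι] {s t : ℤ} {a b : ι → ℤ}

/-- The twisted generator family. -/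
noncomputable def twistFam (x : ι → ∀ i : ℤ, V.V i) (k0 : ι) (d : ι → F) (a : ι → ℤ) :
    ι → ∀ i : ℤ, V.V i :=
  fun k i => if k = k0 then x k0 i + ∑ j, (if a j ≤ i then d j else 0) • x j i else x k i

lemma twistFam_self (x : ι → ∀ i : ℤ, V.V i) (k0 : ι) (d : ι → F) (i : ℤ) :
    twistFam x k0 d a k0 i = x k0 i + ∑ j, (if a j ≤ i then d j else 0) • x j i := by
  simp [twistFam]

lemma twist (hab : ∀ k, a k ≤ b k) (hbt : ∀ k, b k ≤ t) {x : ι → ∀ i : ℤ, V.V i}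
    (hm : StdMaps V a b x) (hB : StdBasis V s t a b x)
    (k0 : ι) (d : ι → F) (hk0 : b k0 = t) (hd0 : d k0 = 0)
    (hdb : ∀ j, d j ≠ 0 → b j = t) (hda : ∀ j, d j ≠ 0 → Allowed (a j) (a k0)) :
    StdMaps V a b (twistFam x k0 d a) ∧ StdBasis V s t a b (twistFam x k0 d a) ∧
    (∀ k, k ≠ k0 → twistFam x k0 d a k = x k) ∧
    (twistFam x k0 d a k0 t = x k0 t + ∑ j, d j • x j t) := by
  set xT := twistFam x k0 d a with hxT
  have hne : ∀ k, k ≠ k0 → xT k = x k := by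
    intro k hk; funext i; simp [hxT, twistFam, hk]
  have hat : ∀ j, d j ≠ 0 → a j ≤ t := fun j hj => le_trans (hab j) (le_of_eq (hdb j hj))
  refine ⟨?_, ?_, hne, ?_⟩
  · -- StdMaps
    intro k i hi hai hbi
    by_cases hk : k = k0
    · subst hk
      have hxTk : ∀ i, xT k i = x k i + ∑ j, (if a j ≤ i then d j else 0) • x j i :=
        fun i => twistFam_self x k d i
      have hit : i ≤ t := le_trans hbi (hbt k)
      constructor
      · -- f condition
        rw [hxTk, map_add, map_sum]
        have hterm : ∀ j, V.f i hi ((if a j ≤ i then d j else 0) • x j i)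
            = (if a j ≤ i + 1 then d j else 0) • (if i + 1 ≤ t then x j (i+1) else 0) := by
          intro j
          by_cases hdj : d j = 0
          · simp [hdj]
          · rw [map_smul]
            by_cases haj : a j ≤ i
            · rw [if_pos haj, if_pos (by omega)]
              have := (hm j i hi haj (by rw [hdb j hdj]; exact hit)).1
              rw [this, hdb j hdj]
            · rw [if_neg haj]
              have haj1 : ¬ (a j ≤ i + 1) := by
                intro hle
                have heq : a j = i + 1 := by omega
                rcases hda j hdj with h1 | h1 | h1
                · omega
                · omega
                · rcases h1.2 with ⟨r, hr⟩; rcases hi with ⟨q, hq⟩; omega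
              rw [if_neg haj1]
              simp
        rw [Finset.sum_congr rfl (fun j _ => hterm j)]
        by_cases h1 : i + 1 ≤ t
        · have hb0 : i + 1 ≤ b k := by rw [hk0]; exact h1
          rw [if_pos hb0, (hm k i hi hai (by omega)).1, if_pos hb0, hxTk]
          simp only [if_pos h1]
        · have hb0 : ¬ (i + 1 ≤ b k) := by rw [hk0]; exact h1
          rw [if_neg hb0, (hm k i hi hai hbi).1, if_neg hb0]
          simp only [if_neg h1, smul_zero]
          simp
      · -- g condition
        rw [hxTk, map_add, map_sum]
        have hterm : ∀ j, V.g i hi ((if a j ≤ i then d j else 0) • x j i)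
            = (if a j ≤ i - 1 then d j else 0) • x j (i-1) := by
          intro j
          by_cases hdj : d j = 0
          · simp [hdj]
          · rw [map_smul]
            by_cases haj : a j ≤ i
            · rw [if_pos haj]
              have := (hm j i hi haj (by rw [hdb j hdj]; exact hit)).2
              rw [this]
              by_cases haj1 : a j ≤ i - 1
              · rw [if_pos haj1, if_pos haj1]
              · rw [if_neg haj1, if_neg haj1, smul_zero]
                exact (zero_smul F (x j (i-1))).symm
            · rw [if_neg haj, if_neg (by omega)]
              exact (zero_smul F _).trans (zero_smul F _).symm
        rw [Finset.sum_congr rfl (fun j _ => hterm j)]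
        by_cases h1 : a k ≤ i - 1
        · rw [if_pos h1, (hm k i hi hai hbi).2, if_pos h1, hxTk]
        · rw [if_neg h1, (hm k i hi hai hbi).2, if_neg h1, zero_add]
          apply Finset.sum_eq_zero
          intro j _
          by_cases hdj : d j = 0
          · simp [hdj]
          · by_cases haj1 : a j ≤ i - 1
            · exfalso
              have hlt : a j < a k := by omega
              rcases hda j hdj with h2 | h2 | h2
              · omega
              · have hak0 : a k = i := by omega
                rcases h2.2 with ⟨r, hr⟩; rcases hi with ⟨q, hq⟩; omega
              · omega
            · rw [if_neg haj1, zero_smul]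
    · have hgoal := hm k i hi hai hbi
      rw [← hne k hk] at hgoal
      exact hgoal
  · -- StdBasis
    intro i his hit
    obtain ⟨hli, hsp⟩ := hB i his hit
    by_cases hk0i : a k0 ≤ i
    · have hk0b : i ≤ b k0 := by rw [hk0]; exact hit
      set k0' : {k : ι // a k ≤ i ∧ i ≤ b k} := ⟨k0, hk0i, hk0b⟩ with hk0'
      set w : V.V i := ∑ j, (if a j ≤ i then d j else 0) • x j i with hw
      have hwmem : w ∈ Submodule.span F ((fun k : {k : ι // a k ≤ i ∧ i ≤ b k} => x k.1 i) ''
          {k | k ≠ k0'}) := by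
        refine Submodule.sum_mem _ (fun j _ => ?_)
        by_cases hdj : d j = 0
        · simp [hdj]
        · by_cases haj : a j ≤ i
          · rw [if_pos haj]
            refine Submodule.smul_mem _ _ (Submodule.subset_span ?_)
            refine ⟨⟨j, haj, by rw [hdb j hdj]; exact hit⟩, ?_, rfl⟩
            simp only [Set.mem_setOf_eq, ne_eq]
            intro hjk
            apply hdj
            have hj : j = k0 := congrArg Subtype.val hjk
            rw [hj, hd0]
          · rw [if_neg haj]; simp
      have hres := li_span_of_eq_add (fun k : {k : ι // a k ≤ i ∧ i ≤ b k} => x k.1 i)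
        (fun k => xT k.1 i) k0' w hli hsp hwmem ?_ ?_
      · exact hres
      · show xT k0 i = x k0 i + w
        rw [hxT, twistFam_self]
      · intro k hk
        have hk1 : k.1 ≠ k0 := fun h => hk (Subtype.ext h)
        show xT k.1 i = x k.1 i
        rw [hne k.1 hk1]
    · have heqf : (fun k : {k : ι // a k ≤ i ∧ i ≤ b k} => xT k.1 i)
          = (fun k => x k.1 i) := by
        funext k
        have hk1 : k.1 ≠ k0 := fun h => hk0i (h ▸ k.2.1)
        rw [hne k.1 hk1]
      rw [heqf]
      exact ⟨hli, hsp⟩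
  · rw [hxT, twistFam_self]
    congr 1
    apply Finset.sum_congr rfl
    intro j _
    by_cases hdj : d j = 0
    · simp [hdj]
    · rw [if_pos (hat j hdj)]
end Std

section Adapted
open Zigzag
variable {F : Type} [Field F] {V : Zigzag F} {ι : Type} [Fintype ι] [DecidableEq ι]
  {s t : ℤ} {a b : ι → ℤ}

lemma spanInsert (y : ι → ∀ i : ℤ, V.V i) (u : ι) (Q : Finset ι) (i : ℤ) :
    Submodule.span F (Set.range fun k : {k : ι // k ∈ insert u Q} => y k.1 i)
      = Submodule.span F {y u i} ⊔ Submodule.span F (Set.range fun k : {k : ι // k ∈ Q} => y k.1 i) := by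
  rw [← Submodule.span_union]
  congr 1
  ext v
  constructor
  · rintro ⟨k, rfl⟩
    rcases Finset.mem_insert.1 k.2 with h | h
    · left
      show y k.1 i = y u i
      rw [h]
    · right; exact ⟨⟨k.1, h⟩, rfl⟩
  · rintro (h | ⟨k, rfl⟩)
    · rw [Set.mem_singleton_iff.1 h]
      exact ⟨⟨u, Finset.mem_insert_self u Q⟩, rfl⟩
    · exact ⟨⟨k.1, Finset.mem_insert_of_mem k.2⟩, rfl⟩

lemma spanAdd (vv ww : V.V t) (S : Submodule F (V.V t)) (hw : ww ∈ S) :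
    Submodule.span F {vv + ww} ⊔ S = Submodule.span F {vv} ⊔ S := by
  apply le_antisymm
  · apply sup_le _ le_sup_right
    rw [Submodule.span_singleton_le_iff_mem]
    exact Submodule.add_mem _ (Submodule.mem_sup_left (Submodule.mem_span_singleton_self vv))
      (Submodule.mem_sup_right hw)
  · apply sup_le _ le_sup_right
    rw [Submodule.span_singleton_le_iff_mem]
    have h2 : (vv + ww) - ww ∈ Submodule.span F {vv + ww} ⊔ S :=
      Submodule.sub_mem _ (Submodule.mem_sup_left (Submodule.mem_span_singleton_self _))
        (Submodule.mem_sup_right hw)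
    simpa using h2

lemma adapted (hfd : FiniteDimensional F (V.V t))
    (hab : ∀ k, a k ≤ b k) (hbt : ∀ k, b k ≤ t) (hst : s ≤ t) :
    ∀ (m : ℕ) (x : ι → ∀ i : ℤ, V.V i), StdMaps V a b x → StdBasis V s t a b x →
    ∀ (Z : Submodule F (V.V t)) (K0 : Finset ι), (∀ k ∈ K0, b k = t) →
    Z ≤ Submodule.span F (Set.range (fun k : {k : ι // k ∈ K0} => x k.1 t)) →
    Module.finrank F Z = m →
    ∃ (x' : ι → ∀ i : ℤ, V.V i) (P : Finset ι), StdMaps V a b x' ∧ StdBasis V s t a b x' ∧ (∀ k, k ∉ K0 → x' k = x k) ∧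
      P ⊆ K0 ∧ Submodule.span F (Set.range (fun k : {k : ι // k ∈ P} => x' k.1 t)) = Z ∧
      Submodule.span F (Set.range (fun k : {k : ι // k ∈ K0} => x' k.1 t))
        = Submodule.span F (Set.range (fun k : {k : ι // k ∈ K0} => x k.1 t)) := by
  haveI := hfd
  intro m
  induction m using Nat.strong_induction_on with
  | _ m IH =>
  intro x hm hB Z K0 hK0 hZ hrk
  by_cases hZbot : Z = ⊥
  · refine ⟨x, ∅, hm, hB, fun _ _ => rfl, Finset.empty_subset _, ?_, rfl⟩
    rw [hZbot]
    have : (Set.range fun k : {k : ι // k ∈ (∅ : Finset ι)} => x k.1 t) = ∅ := by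
      apply Set.range_eq_empty
    rw [this, Submodule.span_empty]
  · obtain ⟨z, hzZ, hz0⟩ := (Submodule.ne_bot_iff Z).1 hZbot
    obtain ⟨c, hc⟩ := (Submodule.mem_span_range_iff_exists_fun F).1 (hZ hzZ)
    set cF : ι → F := fun k => if h : k ∈ K0 then c ⟨k, h⟩ else 0 with hcF
    have hcsum : ∑ k : ι, cF k • x k t = z := by
      have h1 : ∑ k ∈ K0, cF k • x k t = ∑ k : ι, cF k • x k t := by
        apply Finset.sum_subset (Finset.subset_univ K0)
        intro k _ hk
        simp [hcF, hk]
      rw [← h1, ← Finset.sum_coe_sort K0 (fun k => cF k • x k t), ← hc]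
      apply Finset.sum_congr rfl
      intro k _
      simp [hcF, k.2]
    have hex : ∃ k, cF k ≠ 0 := by
      by_contra h
      push_neg at h
      apply hz0
      rw [← hcsum]
      apply Finset.sum_eq_zero
      intro k _
      rw [h k, zero_smul]
    obtain ⟨kw, hkw⟩ := hex
    classical
    set A := (Finset.univ.filter (fun k => cF k ≠ 0)).image a with hA
    have hAne : A.Nonempty :=
      ⟨a kw, Finset.mem_image.2 ⟨kw, Finset.mem_filter.2 ⟨Finset.mem_univ _, hkw⟩, rfl⟩⟩
    obtain ⟨mv, hmvA, hmv⟩ := exists_pivot A hAne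
    obtain ⟨ks, hksf, hks⟩ := Finset.mem_image.1 hmvA
    have hcks : cF ks ≠ 0 := (Finset.mem_filter.1 hksf).2
    have hksK0 : ks ∈ K0 := by
      by_contra h
      exact hcks (by simp [hcF, h])
    have hbks : b ks = t := hK0 ks hksK0
    set d : ι → F := fun j => if j = ks then 0 else cF j / cF ks with hd
    have hd0 : d ks = 0 := by simp [hd]
    have hcne : ∀ j, d j ≠ 0 → cF j ≠ 0 := by
      intro j hj hc0
      apply hj
      by_cases h : j = ks
      · simp [hd, h]
      · simp [hd, h, hc0]
    have hdb : ∀ j, d j ≠ 0 → b j = t := by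
      intro j hj
      have hjK0 : j ∈ K0 := by
        by_contra h
        exact hcne j hj (by simp [hcF, h])
      exact hK0 j hjK0
    have hda : ∀ j, d j ≠ 0 → Allowed (a j) (a ks) := by
      intro j hj
      rw [hks]
      exact hmv (a j) (Finset.mem_image.2 ⟨j, Finset.mem_filter.2 ⟨Finset.mem_univ _, hcne j hj⟩, rfl⟩)
    obtain ⟨hm2, hB2, hne2, hval2⟩ := twist hab hbt hm hB ks d hbks hd0 hdb hda
    set xT := twistFam x ks d a with hxT
    -- the twisted pivot value is (cF ks)⁻¹ • z
    have hsum0 : ∀ (f : ι → V.V t), f ks + ∑ j, (if j = ks then (0 : V.V t) else f j) = ∑ j, f j := by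
      intro f
      rw [← Finset.add_sum_erase _ f (Finset.mem_univ ks),
        ← Finset.add_sum_erase _ (fun j => if j = ks then (0 : V.V t) else f j) (Finset.mem_univ ks)]
      rw [if_pos rfl, zero_add]
      congr 1
      apply Finset.sum_congr rfl
      intro j hj
      rw [if_neg (Finset.ne_of_mem_erase hj)]
    have hmul : cF ks • xT ks t = z := by
      rw [hval2, smul_add, Finset.smul_sum]
      have hterm : ∀ j, cF ks • (d j • x j t) = (if j = ks then (0 : V.V t) else cF j • x j t) := by
        intro j
        by_cases hj : j = ks
        · simp [hd, hj]
        · rw [hd]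
          simp only [if_neg hj]
          rw [smul_smul, mul_comm, div_mul_cancel₀ _ hcks]
      rw [Finset.sum_congr rfl (fun j _ => hterm j), hsum0 (fun j => cF j • x j t), hcsum]
    have hxTt : xT ks t = (cF ks)⁻¹ • z := by
      rw [← hmul, inv_smul_smul₀ hcks]
    set K0' := K0.erase ks with hK0'def
    have hK0'sub : K0' ⊆ K0 := Finset.erase_subset _ _
    have hK0't : ∀ k ∈ K0', b k = t := fun k hk => hK0 k (hK0'sub hk)
    set R : Submodule F (V.V t) :=
      Submodule.span F (Set.range fun k : {k : ι // k ∈ K0'} => xT k.1 t) with hR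
    obtain ⟨hli2, _⟩ := hB2 t hst (le_refl t)
    have hRle : R ≤ Submodule.span F
        ((fun kk : {k : ι // a k ≤ t ∧ t ≤ b k} => xT kk.1 t) '' {kk | kk.1 ≠ ks}) := by
      rw [hR, Submodule.span_le]
      rintro y ⟨k, rfl⟩
      apply Submodule.subset_span
      have hkK0 : k.1 ∈ K0 := hK0'sub k.2
      refine ⟨⟨k.1, le_trans (hab _) (le_of_eq (hK0 _ hkK0)), le_of_eq (hK0 _ hkK0).symm⟩, ?_, rfl⟩
      exact Finset.ne_of_mem_erase k.2
    have hzR : z ∉ R := by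
      intro hzR
      have h1 : xT ks t ∈ R := by
        rw [hxTt]
        exact Submodule.smul_mem _ _ hzR
      have h2 := hli2.notMem_span_image (s := {kk | kk.1 ≠ ks})
        (x := ⟨ks, ⟨le_trans (hab _) (le_of_eq hbks), le_of_eq hbks.symm⟩⟩) (by simp)
      exact h2 (hRle h1)
    have hZ'ltZ : Z ⊓ R < Z := by
      apply lt_of_le_of_ne inf_le_left
      intro h
      rw [← h] at hzZ
      exact hzR hzZ.2
    have hrklt : Module.finrank F ↥(Z ⊓ R) < m := by
      rw [← hrk]
      exact Submodule.finrank_lt_finrank_of_lt hZ'ltZ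
    obtain ⟨x3, P', hm3, hB3, hne3, hP'sub, hspanP', hspanK0'⟩ :=
      IH _ hrklt xT hm2 hB2 (Z ⊓ R) K0' hK0't inf_le_right rfl
    have hksnot : ks ∉ K0' := Finset.notMem_erase _ _
    have hx3ks : x3 ks = xT ks := hne3 ks hksnot
    have hxTK0' : ∀ k ∈ K0', xT k = x k := fun k hk => hne2 k (Finset.ne_of_mem_erase hk)
    have hx3K0'span :
        Submodule.span F (Set.range fun k : {k : ι // k ∈ K0'} => x3 k.1 t) = R := hspanK0'
    have hxK0'span :
        Submodule.span F (Set.range fun k : {k : ι // k ∈ K0'} => x k.1 t) = R := by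
      rw [hR]
      congr 1
      ext v
      constructor
      · rintro ⟨k, rfl⟩
        exact ⟨k, show xT k.1 t = x k.1 t by rw [hxTK0' k.1 k.2]⟩
      · rintro ⟨k, rfl⟩
        exact ⟨k, show x k.1 t = xT k.1 t by rw [hxTK0' k.1 k.2]⟩
    have hwR : ∑ j, d j • x j t ∈ R := by
      rw [← hxK0'span]
      apply Submodule.sum_mem
      intro j _
      by_cases hdj : d j = 0
      · rw [hdj, zero_smul]
        exact Submodule.zero_mem _
      · apply Submodule.smul_mem
        apply Submodule.subset_span
        have hjK0 : j ∈ K0 := by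
          by_contra h
          exact hcne j hdj (by simp [hcF, h])
        have hjne : j ≠ ks := by
          intro h
          rw [h] at hdj
          exact hdj hd0
        exact ⟨⟨j, Finset.mem_erase.2 ⟨hjne, hjK0⟩⟩, rfl⟩
    have hK0ins : K0 = insert ks K0' := (Finset.insert_erase hksK0).symm
    have hpres : Submodule.span F (Set.range fun k : {k : ι // k ∈ K0} => x3 k.1 t)
        = Submodule.span F (Set.range fun k : {k : ι // k ∈ K0} => x k.1 t) := by
      rw [hK0ins, spanInsert x3 ks K0' t, spanInsert x ks K0' t, hx3K0'span, hxK0'span, hx3ks,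
        hval2, spanAdd _ _ _ hwR]
    refine ⟨x3, insert ks P', hm3, hB3, ?_, ?_, ?_, hpres⟩
    · intro k hk
      have hk' : k ∉ K0' := fun h => hk (hK0'sub h)
      have hkne : k ≠ ks := fun h => hk (h ▸ hksK0)
      rw [hne3 k hk', hne2 k hkne]
    · intro k hk
      rcases Finset.mem_insert.1 hk with h | h
      · rw [h]; exact hksK0
      · exact hK0'sub (hP'sub h)
    · rw [spanInsert x3 ks P' t, hspanP', hx3ks, hxTt]
      have hspan_z : Submodule.span F {(cF ks)⁻¹ • z} = Submodule.span F {z} :=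
        Submodule.span_singleton_smul_eq (isUnit_iff_ne_zero.2 (inv_ne_zero hcks)) z
      rw [hspan_z]
      apply le_antisymm
      · apply sup_le
        · rw [Submodule.span_singleton_le_iff_mem]
          exact hzZ
        · exact inf_le_left
      · intro w hw
        have hw2 : w ∈ Submodule.span F (Set.range fun k : {k : ι // k ∈ K0} => x3 k.1 t) := by
          rw [hpres]
          exact hZ hw
        rw [hK0ins, spanInsert x3 ks K0' t, hx3K0'span, hx3ks, hxTt] at hw2
        rcases Submodule.mem_sup.1 hw2 with ⟨y, hy, r, hr, hyr⟩
        rcases Submodule.mem_span_singleton.1 hy with ⟨mu, hmu⟩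
        have hyZ : y ∈ Z := by
          rw [← hmu]
          exact Submodule.smul_mem _ _ (Submodule.smul_mem _ _ hzZ)
        have hrZ : r ∈ Z := by
          have hreq : r = w - y := by
            rw [← hyr]
            abel
          rw [hreq]
          exact Submodule.sub_mem _ hw hyZ
        rw [← hyr]
        apply Submodule.add_mem
        · apply Submodule.mem_sup_left
          rw [Submodule.mem_span_singleton]
          exact ⟨mu * (cF ks)⁻¹, by rw [mul_smul, hmu]⟩
        · exact Submodule.mem_sup_right (Submodule.mem_inf.2 ⟨hrZ, hr⟩)

end Adapted

section Main
open Zigzag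
variable {F : Type} [Field F]

/-- Zero out the edge between `t-1` and `t`. -/
noncomputable abbrev zeroEdge (V : Zigzag F) (t : ℤ) : Zigzag F where
  V := V.V
  acg := V.acg
  mod := V.mod
  f i h := if i = t - 1 then 0 else V.f i h
  g i h := if i = t then 0 else V.g i h

lemma zeroEdge_f (V : Zigzag F) (t i : ℤ) (h : Even i) (hne : i ≠ t - 1) :
    (zeroEdge V t).f i h = V.f i h := by simp [zeroEdge, hne]

lemma zeroEdge_f' (V : Zigzag F) (t : ℤ) (h : Even (t - 1)) :
    (zeroEdge V t).f (t - 1) h = 0 := by simp [zeroEdge]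

lemma zeroEdge_g (V : Zigzag F) (t i : ℤ) (h : Even i) (hne : i ≠ t) :
    (zeroEdge V t).g i h = V.g i h := by simp [zeroEdge, hne]

/-- Transport along an index equality. -/
noncomputable def eqLE (V : Zigzag F) {i j : ℤ} (h : i = j) : V.V i ≃ₗ[F] V.V j := by
  subst h; exact LinearEquiv.refl F _

lemma eqLE_rfl (V : Zigzag F) {i : ℤ} (h : i = i) (v : V.V i) : eqLE V h v = v := rfl

lemma eqLE_rfl_symm (V : Zigzag F) {i : ℤ} (h : i = i) (v : V.V i) : (eqLE V h).symm v = v := rfl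

lemma eqLE_symm_eqLE (V : Zigzag F) {i j : ℤ} (h h' : i = j) (v : V.V i) :
    (eqLE V h).symm (eqLE V h' v) = v := by subst h; rfl

lemma liSpanTransfer {M : Type} [AddCommGroup M] [Module F M] {ι ι' : Type} (e : ι ≃ ι')
    (v : ι → M) (v' : ι' → M) (hv : ∀ k, v' (e k) = v k)
    (h : LinearIndependent F v ∧ Submodule.span F (Set.range v) = ⊤) :
    LinearIndependent F v' ∧ Submodule.span F (Set.range v') = ⊤ := by
  have hfe : v' = v ∘ e.symm := by
    funext j
    conv_lhs => rw [← e.apply_symm_apply j]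
    rw [Function.comp_apply, hv]
  constructor
  · rw [hfe]
    exact h.1.comp e.symm e.symm.injective
  · rw [hfe, Set.range_comp, e.symm.surjective.range_eq, Set.image_univ]
    exact h.2

lemma range_restrict_eq_image {ι M : Type} (v : ι → M) (p : ι → Prop) :
    Set.range (fun k : {k // p k} => v k.1) = v '' {k | p k} :=
  (Set.image_eq_range v {k | p k}).symm

set_option maxHeartbeats 2000000 in
lemma stdMain : ∀ (N : ℕ) (s t : ℤ), s ≤ t → t - s = N → ∀ (V : Zigzag F),
    (∀ i, FiniteDimensional F (V.V i)) →
    (∀ (h : Even t) (v : V.V t), V.f t h v = 0) →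
    (∀ (h : Even s) (v : V.V s), V.g s h v = 0) →
    ∃ (ι : Type) (_ : Fintype ι) (_ : DecidableEq ι) (a b : ι → ℤ) (x : ι → ∀ i : ℤ, V.V i),
      (∀ k, s ≤ a k) ∧ (∀ k, a k ≤ b k) ∧ (∀ k, b k ≤ t) ∧
      StdMaps V a b x ∧ StdBasis V s t a b x := by
  intro N
  induction N with
  | zero =>
    intro s t hst hts V hfd hEf hEg
    have hts' : t = s := by omega
    subst hts'
    haveI := hfd t
    set β := Module.finBasis F (V.V t) with hβ
    set x : Fin (Module.finrank F (V.V t)) → ∀ i : ℤ, V.V i :=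
      fun k i => if h : i = t then (eqLE V h).symm (β k) else 0 with hx
    have hxs : ∀ k, x k t = β k := by
      intro k
      rw [hx]
      simp only [dif_pos rfl]
      exact eqLE_rfl_symm V rfl _
    refine ⟨Fin (Module.finrank F (V.V t)), inferInstance, inferInstance,
      fun _ => t, fun _ => t, x,
      fun _ => le_refl t, fun _ => le_refl t, fun _ => le_refl t, ?_, ?_⟩
    · intro k i hi hai hbi
      have hit : i = t := le_antisymm hbi hai
      subst hit
      rw [hxs k]
      constructor
      · rw [if_neg (by omega)]
        exact hEf hi (β k)
      · rw [if_neg (by omega)]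
        exact hEg hi (β k)
    · intro i his hit
      have hit' : i = t := le_antisymm hit his
      subst hit'
      have hfam : (fun k : {k : Fin (Module.finrank F (V.V i)) // i ≤ i ∧ i ≤ i} => x k.1 i)
          = (fun k => β k.1) := funext (fun k => hxs k.1)
      rw [hfam]
      constructor
      · exact β.linearIndependent.comp Subtype.val Subtype.val_injective
      · have : Set.range (fun k : {k : Fin (Module.finrank F (V.V i)) // i ≤ i ∧ i ≤ i} => β k.1)
            = Set.range β := by
          ext v
          constructor
          · rintro ⟨k, rfl⟩
            exact ⟨k.1, rfl⟩
          · rintro ⟨j, rfl⟩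
            exact ⟨⟨j, le_refl i, le_refl i⟩, rfl⟩
        rw [this]
        exact β.span_eq
  | succ N IH =>
    intro s t hst hts V hfd hEf hEg
    classical
    have hstlt : s < t := by omega
    set W := zeroEdge V t with hW
    have hfdW : ∀ i, FiniteDimensional F (W.V i) := hfd
    have hEfW : ∀ (h : Even (t - 1)) (v : W.V (t - 1)), W.f (t - 1) h v = 0 := by
      intro h v
      rw [zeroEdge_f' V t h]
      rfl
    have hEgW : ∀ (h : Even s) (v : W.V s), W.g s h v = 0 := by
      intro h v
      rw [zeroEdge_g V t s h (by omega)]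
      exact hEg h v
    obtain ⟨ι, _, _, a, b, x, has, hab, hbt1, hmW, hBW⟩ :=
      IH s (t - 1) (by omega) (by omega) W hfdW hEfW hEgW
    set K0 : Finset ι := Finset.univ.filter (fun k => b k = t - 1) with hK0def
    have hK0mem : ∀ k, k ∈ K0 ↔ b k = t - 1 := by
      intro k
      simp [hK0def]
    have hK0b : ∀ k ∈ K0, b k = t - 1 := fun k hk => (hK0mem k).1 hk
    have hsupp_eq : ∀ k, (a k ≤ t - 1 ∧ t - 1 ≤ b k) ↔ k ∈ K0 := by
      intro k
      rw [hK0mem]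
      constructor
      · intro ⟨h1, h2⟩
        have := hbt1 k
        omega
      · intro h
        have := hab k
        omega
    have hK0span : Submodule.span F (Set.range fun k : {k : ι // k ∈ K0} => x k.1 (t - 1)) = ⊤ := by
      obtain ⟨_, hsp⟩ := hBW (t - 1) (by omega) (le_refl _)
      rw [← hsp]
      congr 1
      ext v
      constructor
      · rintro ⟨k, rfl⟩
        exact ⟨⟨k.1, (hsupp_eq k.1).2 k.2⟩, rfl⟩
      · rintro ⟨k, rfl⟩
        exact ⟨⟨k.1, (hsupp_eq k.1).1 k.2⟩, rfl⟩
    rcases Int.even_or_odd t with hte | hto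
    · -- CASE B : t even, β := V.g t
      have hWf : ∀ (i : ℤ) (hi : Even i), i ≠ t - 1 → W.f i hi = V.f i hi := by
        intro i hi hne
        exact zeroEdge_f V t i hi hne
      have hWg : ∀ (i : ℤ) (hi : Even i), i ≠ t → W.g i hi = V.g i hi := by
        intro i hi hne
        exact zeroEdge_g V t i hi hne
      set βt : V.V t →ₗ[F] V.V (t - 1) := V.g t hte with hβt
      obtain ⟨x', P, hm', hB', hne', hPsub, hPspan, hK0span'⟩ :=
        adapted (V := W) (s := s) (t := t - 1) (hfd (t - 1)) hab hbt1 (by omega)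
          (Module.finrank F ↥(LinearMap.range βt)) x hmW hBW (LinearMap.range βt) K0 hK0b
          (by rw [hK0span]; exact le_top) rfl
      obtain ⟨C, hC⟩ := Submodule.exists_isCompl (LinearMap.ker βt)
      haveI := hfd t
      have hex : ∀ k ∈ P, ∃ v, v ∈ C ∧ βt v = x' k (t - 1) := by
        intro k hk
        have h1 : x' k (t - 1) ∈ LinearMap.range βt := by
          rw [← hPspan]
          exact Submodule.subset_span ⟨⟨k, hk⟩, rfl⟩
        obtain ⟨v, hv0⟩ := LinearMap.mem_range.1 h1
        have hv : βt v = x' k (t - 1) := hv0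
        have hvtop : v ∈ LinearMap.ker βt ⊔ C := by
          rw [hC.sup_eq_top]
          trivial
        obtain ⟨vk, hvk, vc, hvc, hsum⟩ := Submodule.mem_sup.1 hvtop
        refine ⟨vc, hvc, ?_⟩
        have h2 : βt vk = 0 := LinearMap.mem_ker.1 hvk
        have h3 : βt (vk + vc) = βt vk + βt vc := map_add βt vk vc
        rw [hsum, hv, h2, zero_add] at h3
        exact h3.symm
      set uC : ι → V.V t := fun k => if hk : k ∈ P then (hex k hk).choose else 0 with huC
      have huCC : ∀ k ∈ P, uC k ∈ C := by
        intro k hk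
        simp only [huC, dif_pos hk]
        exact (hex k hk).choose_spec.1
      have huCβ : ∀ k ∈ P, βt (uC k) = x' k (t - 1) := by
        intro k hk
        simp only [huC, dif_pos hk]
        exact (hex k hk).choose_spec.2
      set nK := Module.finrank F ↥(LinearMap.ker βt) with hnK
      set kB := Module.finBasis F ↥(LinearMap.ker βt) with hkB
      set a' : ι ⊕ Fin nK → ℤ := Sum.elim a (fun _ => t) with ha'
      set b' : ι ⊕ Fin nK → ℤ :=
        Sum.elim (fun k => if k ∈ P then t else b k) (fun _ => t) with hb'
      set X : ι ⊕ Fin nK → ∀ i : ℤ, V.V i := Sum.elim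
        (fun k i => if h : i = t then (eqLE V h).symm (uC k) else x' k i)
        (fun l i => if h : i = t then (eqLE V h).symm ((kB l : ↥(LinearMap.ker βt)) : V.V t) else 0)
        with hX
      have hXl_lt : ∀ k i, i ≠ t → X (Sum.inl k) i = x' k i := by
        intro k i hne
        simp [hX, hne]
      have hXl_t : ∀ k, X (Sum.inl k) t = uC k := by
        intro k
        simp only [hX, Sum.elim_inl, dif_pos rfl]
        exact eqLE_rfl_symm V rfl _
      have hXr_t : ∀ l, X (Sum.inr l) t = ((kB l : ↥(LinearMap.ker βt)) : V.V t) := by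
        intro l
        simp only [hX, Sum.elim_inr, dif_pos rfl]
        exact eqLE_rfl_symm V rfl _
      refine ⟨ι ⊕ Fin nK, inferInstance, inferInstance, a', b', X, ?_, ?_, ?_, ?_, ?_⟩
      · intro k
        cases k with
        | inl k => exact has k
        | inr l => exact le_of_lt hstlt
      · intro k
        cases k with
        | inl k =>
          simp only [ha', hb', Sum.elim_inl]
          split
          · have h1 := hab k
            have h2 := hbt1 k
            omega
          · exact hab k
        | inr l => exact le_refl t
      · intro k
        cases k with
        | inl k =>
          simp only [hb', Sum.elim_inl]
          split
          · exact le_refl t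
          · have := hbt1 k
            omega
        | inr l => exact le_refl t
      · -- StdMaps
        intro k i hi hai hbi
        cases k with
        | inr l =>
          have h1 : t ≤ i := hai
          have h2 : i ≤ t := hbi
          have hit : i = t := le_antisymm h2 h1
          subst hit
          constructor
          · show V.f i hi (X (Sum.inr l) i) = if i + 1 ≤ b' (Sum.inr l) then X (Sum.inr l) (i+1) else 0
            simp only [hb', Sum.elim_inr]
            rw [if_neg (by omega)]
            exact hEf hi _
          · show V.g i hi (X (Sum.inr l) i) = if a' (Sum.inr l) ≤ i - 1 then X (Sum.inr l) (i-1) else 0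
            simp only [ha', Sum.elim_inr]
            rw [if_neg (by omega), hXr_t l]
            exact LinearMap.mem_ker.1 (kB l).2
        | inl k =>
          have hai' : a k ≤ i := hai
          have hbi' : i ≤ (if k ∈ P then t else b k) := by
            have h0 : i ≤ b' (Sum.inl k) := hbi
            simpa only [hb', Sum.elim_inl] using h0
          by_cases hit : i = t
          · -- i = t : k must be in P
            have hkP : k ∈ P := by
              by_contra hp
              rw [if_neg hp] at hbi'
              have := hbt1 k
              omega
            subst hit
            constructor
            · show V.f i hi (X (Sum.inl k) i) = if i + 1 ≤ b' (Sum.inl k) then X (Sum.inl k) (i+1) else 0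
              simp only [hb', Sum.elim_inl]
              rw [if_pos hkP, if_neg (by omega)]
              exact hEf hi _
            · show V.g i hi (X (Sum.inl k) i) = if a' (Sum.inl k) ≤ i - 1 then X (Sum.inl k) (i-1) else 0
              simp only [ha', Sum.elim_inl]
              have hbk : b k = i - 1 := hK0b k (hPsub hkP)
              rw [if_pos (by have h1 := hab k; omega), hXl_t k,
                hXl_lt k (i-1) (by omega)]
              exact huCβ k hkP
          · -- i ≤ t - 2
            have hile : i ≤ t - 2 := by
              have h1 : i ≤ t := by
                by_cases hkP : k ∈ P
                · rw [if_pos hkP] at hbi'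
                  exact hbi'
                · rw [if_neg hkP] at hbi'
                  have := hbt1 k
                  omega
              have hne1 : i ≠ t - 1 := by
                intro h
                rcases hte with ⟨r, hr⟩
                rcases hi with ⟨q, hq⟩
                omega
              omega
            have hibk : i ≤ b k := by
              by_cases hkP : k ∈ P
              · have hbk := hK0b k (hPsub hkP)
                omega
              · rwa [if_neg hkP] at hbi'
            have hcf := (hm' k i hi hai' hibk).1
            have hcg := (hm' k i hi hai' hibk).2
            rw [hWf i hi (by omega)] at hcf
            rw [hWg i hi (by omega)] at hcg
            constructor
            · show V.f i hi (X (Sum.inl k) i) = if i + 1 ≤ b' (Sum.inl k) then X (Sum.inl k) (i+1) else 0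
              simp only [hX, hb', Sum.elim_inl]
              rw [dif_neg hit]
              by_cases hkP : k ∈ P
              · have hbk := hK0b k (hPsub hkP)
                rw [if_pos hkP, if_pos (by omega : i + 1 ≤ t),
                  dif_neg (by omega : ¬ (i + 1 = t))]
                rw [if_pos (by omega : i + 1 ≤ b k)] at hcf
                exact hcf
              · rw [if_neg hkP]
                by_cases h1 : i + 1 ≤ b k
                · rw [if_pos h1, dif_neg (by have := hbt1 k; omega : ¬ (i + 1 = t))]
                  rw [if_pos h1] at hcf
                  exact hcf
                · rw [if_neg h1]
                  rw [if_neg h1] at hcf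
                  exact hcf
            · show V.g i hi (X (Sum.inl k) i) = if a' (Sum.inl k) ≤ i - 1 then X (Sum.inl k) (i-1) else 0
              simp only [hX, ha', Sum.elim_inl]
              rw [dif_neg hit, dif_neg (show ¬ (i - 1 = t) by omega)]
              exact hcg
      · -- StdBasis
        intro i his hit
        by_cases hit' : i = t
        · subst hit'
          set ufam : {k : ι // k ∈ P} → V.V i := fun k => uC k.1 with hufam
          set wv : Fin nK → V.V i := fun l => ((kB l : ↥(LinearMap.ker βt)) : V.V i) with hwv
          obtain ⟨hli1, hsp1⟩ := hB' (i - 1) (by omega) (le_refl _)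
          have hjinj : Function.Injective (fun k : {k : ι // k ∈ P} =>
              (⟨k.1, (hsupp_eq k.1).2 (hPsub k.2)⟩ : {k : ι // a k ≤ i - 1 ∧ i - 1 ≤ b k})) := by
            intro k1 k2 h12
            apply Subtype.ext
            have h13 := Subtype.ext_iff.1 h12
            exact h13
          have hliP : LinearIndependent F (fun k : {k : ι // k ∈ P} => x' k.1 (i - 1)) :=
            hli1.comp _ hjinj
          have hcomp : (⇑βt ∘ ufam) = (fun k : {k : ι // k ∈ P} => x' k.1 (i - 1)) := by
            funext k
            rw [Function.comp_apply]
            show βt (uC k.1) = x' k.1 (i - 1)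
            exact huCβ k.1 k.2
          have hliu : LinearIndependent F ufam := by
            apply LinearIndependent.of_comp βt
            rw [hcomp]
            exact hliP
          have hPspan' : Submodule.span F (Set.range (fun k : {k : ι // k ∈ P} => x' k.1 (i - 1)))
              = LinearMap.range βt := hPspan
          have hmapspan : Submodule.map βt (Submodule.span F (Set.range ufam))
              = LinearMap.range βt := by
            rw [← Submodule.span_image, ← Set.range_comp, hcomp, hPspan']
          have hsupku : Submodule.span F (Set.range ufam) ⊔ LinearMap.ker βt = ⊤ := by
            rw [eq_top_iff]
            intro v _
            have hvtop : v ∈ LinearMap.ker βt ⊔ C := by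
              rw [hC.sup_eq_top]
              trivial
            obtain ⟨vk, hvk, vc, hvc, hsum⟩ := Submodule.mem_sup.1 hvtop
            have h1 : βt vc ∈ LinearMap.range βt := ⟨vc, rfl⟩
            rw [← hmapspan] at h1
            obtain ⟨w', hw', hww⟩ := Submodule.mem_map.1 h1
            have h2 : vc - w' ∈ LinearMap.ker βt := by
              rw [LinearMap.mem_ker, map_sub, hww, sub_self]
            have h3 : v = w' + (vk + (vc - w')) := by
              rw [← hsum]
              abel
            rw [h3]
            exact Submodule.add_mem _ (Submodule.mem_sup_left hw')
              (Submodule.mem_sup_right (Submodule.add_mem _ hvk h2))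
          have hliw : LinearIndependent F wv :=
            kB.linearIndependent.map' (LinearMap.ker βt).subtype
              (Submodule.ker_subtype (LinearMap.ker βt))
          have hspanw : Submodule.span F (Set.range wv) = LinearMap.ker βt := by
            have hr : Set.range wv = (LinearMap.ker βt).subtype '' (Set.range kB) := by
              rw [← Set.range_comp]
              rfl
            rw [hr, Submodule.span_image, kB.span_eq, Submodule.map_top, Submodule.range_subtype]
          have hspanu_leC : Submodule.span F (Set.range ufam) ≤ C := by
            rw [Submodule.span_le]
            rintro v ⟨k, rfl⟩
            exact huCC k.1 k.2
          have hdisj2 : Disjoint (Submodule.span F (Set.range ufam))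
              (Submodule.span F (Set.range wv)) := by
            rw [hspanw]
            exact Disjoint.mono hspanu_leC (le_refl _) hC.disjoint.symm
          have hsum : LinearIndependent F (Sum.elim ufam wv) := hliu.sum_type hliw hdisj2
          have hspansum : Submodule.span F (Set.range (Sum.elim ufam wv)) = ⊤ := by
            rw [Set.Sum.elim_range, Submodule.span_union, hspanw]
            exact hsupku
          set eT : {k : ι // k ∈ P} ⊕ Fin nK → {k' : ι ⊕ Fin nK // a' k' ≤ i ∧ i ≤ b' k'} :=
            Sum.elim
              (fun k => ⟨Sum.inl k.1,
                ⟨le_trans (le_trans (hab k.1) (hbt1 k.1)) (by omega),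
                 le_of_eq (show (i : ℤ) = b' (Sum.inl k.1) by
                   simp only [hb', Sum.elim_inl]
                   rw [if_pos k.2])⟩⟩)
              (fun l => ⟨Sum.inr l, ⟨le_refl i, le_refl i⟩⟩) with heT
          have heTinj : Function.Injective eT := by
            intro p q hpq
            have hval := Subtype.ext_iff.1 hpq
            cases p with
            | inl k =>
              cases q with
              | inl k2 =>
                simp only [heT, Sum.elim_inl] at hval
                exact congrArg Sum.inl (Subtype.ext (Sum.inl.inj hval))
              | inr l =>
                simp only [heT, Sum.elim_inl, Sum.elim_inr] at hval
                exact absurd hval (by simp)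
            | inr l =>
              cases q with
              | inl k2 =>
                simp only [heT, Sum.elim_inl, Sum.elim_inr] at hval
                exact absurd hval (by simp)
              | inr l2 =>
                simp only [heT, Sum.elim_inr] at hval
                rw [Sum.inr.inj hval]
          have heTsurj : Function.Surjective eT := by
            rintro ⟨k', hk'⟩
            cases k' with
            | inl k =>
              have hkP : k ∈ P := by
                by_contra h
                have h2 := hk'.2
                simp only [hb', Sum.elim_inl, if_neg h] at h2
                have := hbt1 k
                omega
              exact ⟨Sum.inl ⟨k, hkP⟩, Subtype.ext rfl⟩
            | inr l => exact ⟨Sum.inr l, Subtype.ext rfl⟩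
          refine liSpanTransfer (Equiv.ofBijective eT ⟨heTinj, heTsurj⟩)
            (Sum.elim ufam wv) (fun k' : {k' : ι ⊕ Fin nK // a' k' ≤ i ∧ i ≤ b' k'} => X k'.1 i)
            ?_ ⟨hsum, hspansum⟩
          intro k
          cases k with
          | inl k =>
            show X (Sum.inl k.1) i = ufam k
            rw [hXl_t]
          | inr l =>
            show X (Sum.inr l) i = wv l
            rw [hXr_t]
        · have hile : i ≤ t - 1 := by omega
          obtain ⟨hliI, hspI⟩ := hB' i his hile
          have hbge : ∀ k : ι, a k ≤ i ∧ i ≤ b k → i ≤ b' (Sum.inl k) := by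
            intro k hk
            simp only [hb', Sum.elim_inl]
            split
            · omega
            · exact hk.2
          set eI : {k : ι // a k ≤ i ∧ i ≤ b k} → {k' : ι ⊕ Fin nK // a' k' ≤ i ∧ i ≤ b' k'} :=
            fun k => ⟨Sum.inl k.1, ⟨k.2.1, hbge k.1 k.2⟩⟩ with heI
          have heIinj : Function.Injective eI := by
            intro p q hpq
            have hval := Subtype.ext_iff.1 hpq
            simp only [heI] at hval
            exact Subtype.ext (Sum.inl.inj hval)
          have heIsurj : Function.Surjective eI := by
            rintro ⟨k', hk'⟩
            cases k' with
            | inl k =>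
              have hik : i ≤ b k := by
                have h2 := hk'.2
                by_cases hkP : k ∈ P
                · have : b k = t - 1 := hK0b k (hPsub hkP)
                  omega
                · simp only [hb', Sum.elim_inl, if_neg hkP] at h2
                  exact h2
              exact ⟨⟨k, hk'.1, hik⟩, Subtype.ext rfl⟩
            | inr l =>
              exfalso
              have h1 : t ≤ i := hk'.1
              omega
          refine liSpanTransfer (Equiv.ofBijective eI ⟨heIinj, heIsurj⟩)
            (fun k : {k : ι // a k ≤ i ∧ i ≤ b k} => x' k.1 i)
            (fun k' : {k' : ι ⊕ Fin nK // a' k' ≤ i ∧ i ≤ b' k'} => X k'.1 i)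
            ?_ ⟨hliI, hspI⟩
          intro k
          show X (Sum.inl k.1) i = x' k.1 i
          exact hXl_lt k.1 i (by omega)

    · -- CASE A : t odd, α := V.f (t-1)
      have het1 : Even (t - 1) := by
        rcases hto with ⟨r, hr⟩
        exact ⟨r, by omega⟩
      have ht : t - 1 + 1 = t := by omega
      have hWf : ∀ (i : ℤ) (hi : Even i), i ≠ t - 1 → W.f i hi = V.f i hi := by
        intro i hi hne
        exact zeroEdge_f V t i hi hne
      have hWg : ∀ (i : ℤ) (hi : Even i), i ≠ t → W.g i hi = V.g i hi := by
        intro i hi hne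
        exact zeroEdge_g V t i hi hne
      set αt : V.V (t - 1) →ₗ[F] V.V t :=
        ((eqLE V ht).toLinearMap).comp (V.f (t - 1) het1) with hαt
      obtain ⟨x', P, hm', hB', hne', hPsub, hPspan, hK0span'⟩ :=
        adapted (V := W) (s := s) (t := t - 1) (hfd (t - 1)) hab hbt1 (by omega)
          (Module.finrank F ↥(LinearMap.ker αt)) x hmW hBW (LinearMap.ker αt) K0 hK0b
          (by rw [hK0span]; exact le_top) rfl
      have hPker : ∀ k ∈ P, V.f (t - 1) het1 (x' k (t - 1)) = 0 := by
        intro k hk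
        have h1 : x' k (t - 1) ∈ LinearMap.ker αt := by
          rw [← hPspan]
          exact Submodule.subset_span ⟨⟨k, hk⟩, rfl⟩
        have h2 : eqLE V ht (V.f (t - 1) het1 (x' k (t - 1))) = 0 := LinearMap.mem_ker.1 h1
        exact (LinearEquiv.map_eq_zero_iff _).1 h2
      have hPker' : ∀ k ∈ P, αt (x' k (t - 1)) = 0 := by
        intro k hk
        show eqLE V ht (V.f (t - 1) het1 (x' k (t - 1))) = 0
        rw [hPker k hk, map_zero]
      obtain ⟨Dc, hDc⟩ := Submodule.exists_isCompl (LinearMap.range αt)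
      haveI := hfd t
      set nD := Module.finrank F ↥Dc with hnD
      set dB := Module.finBasis F ↥Dc with hdB
      set a' : ι ⊕ Fin nD → ℤ := Sum.elim a (fun _ => t) with ha'
      set b' : ι ⊕ Fin nD → ℤ :=
        Sum.elim (fun k => if k ∈ K0 ∧ k ∉ P then t else b k) (fun _ => t) with hb'
      set xt : ι → V.V t := fun k => αt (x' k (t - 1)) with hxt
      set X : ι ⊕ Fin nD → ∀ i : ℤ, V.V i := Sum.elim
        (fun k i => if h : i = t then (eqLE V h).symm (xt k) else x' k i)
        (fun l i => if h : i = t then (eqLE V h).symm ((dB l : ↥Dc) : V.V t) else 0) with hX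
      have hXl_lt : ∀ k i, i ≠ t → X (Sum.inl k) i = x' k i := by
        intro k i hne
        simp [hX, hne]
      have hXl_t : ∀ k, X (Sum.inl k) t = xt k := by
        intro k
        simp only [hX, Sum.elim_inl, dif_pos rfl]
        exact eqLE_rfl_symm V rfl _
      have hXr_t : ∀ l, X (Sum.inr l) t = ((dB l : ↥Dc) : V.V t) := by
        intro l
        simp only [hX, Sum.elim_inr, dif_pos rfl]
        exact eqLE_rfl_symm V rfl _
      refine ⟨ι ⊕ Fin nD, inferInstance, inferInstance, a', b', X, ?_, ?_, ?_, ?_, ?_⟩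
      · intro k
        cases k with
        | inl k => exact has k
        | inr l => exact le_of_lt hstlt
      · intro k
        cases k with
        | inl k =>
          simp only [ha', hb', Sum.elim_inl]
          split
          · have h1 := hab k
            have h2 := hbt1 k
            omega
          · exact hab k
        | inr l => exact le_refl t
      · intro k
        cases k with
        | inl k =>
          simp only [hb', Sum.elim_inl]
          split
          · exact le_refl t
          · have := hbt1 k
            omega
        | inr l => exact le_refl t
      · -- StdMaps
        intro k i hi hai hbi
        cases k with
        | inr l =>
          exfalso
          have h1 : t ≤ i := hai
          have h2 : i ≤ t := hbi
          rcases hto with ⟨r, hr⟩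
          rcases hi with ⟨q, hq⟩
          omega
        | inl k =>
          have hai' : a k ≤ i := hai
          have hine : i ≠ t := by
            intro h
            rcases hto with ⟨r, hr⟩
            rcases hi with ⟨q, hq⟩
            omega
          have hbi' : i ≤ (if k ∈ K0 ∧ k ∉ P then t else b k) := by
            have h0 : i ≤ b' (Sum.inl k) := hbi
            simpa only [hb', Sum.elim_inl] using h0
          have hibk : i ≤ b k := by
            by_cases hext : k ∈ K0 ∧ k ∉ P
            · rw [if_pos hext] at hbi'
              have hbk := hK0b k hext.1
              omega
            · rwa [if_neg hext] at hbi'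
          have hile : i ≤ t - 1 := by
            have := hbt1 k
            omega
          have hcf := (hm' k i hi hai' hibk).1
          have hcg := (hm' k i hi hai' hibk).2
          rw [hWg i hi (by omega)] at hcg
          constructor
          · show V.f i hi (X (Sum.inl k) i) = if i + 1 ≤ b' (Sum.inl k) then X (Sum.inl k) (i+1) else 0
            simp only [hX, hb', Sum.elim_inl]
            rw [dif_neg hine]
            by_cases hext : k ∈ K0 ∧ k ∉ P
            · have hbk := hK0b k hext.1
              rw [if_pos hext, if_pos (by omega : i + 1 ≤ t)]
              by_cases hi1 : i = t - 1
              · subst hi1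
                rw [dif_pos ht]
                exact (eqLE_symm_eqLE V ht ht _).symm
              · rw [dif_neg (by omega : ¬ (i + 1 = t))]
                rw [hWf i hi hi1, if_pos (by omega : i + 1 ≤ b k)] at hcf
                exact hcf
            · rw [if_neg hext]
              by_cases h1 : i + 1 ≤ b k
              · have hi1 : i ≠ t - 1 := by
                  have := hbt1 k
                  omega
                rw [if_pos h1, dif_neg (by have := hbt1 k; omega : ¬ (i + 1 = t))]
                rw [hWf i hi hi1, if_pos h1] at hcf
                exact hcf
              · rw [if_neg h1]
                by_cases hi1 : i = t - 1
                · have hkK0 : k ∈ K0 := (hK0mem k).2 (by omega)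
                  have hkP : k ∈ P := by
                    by_contra hp
                    exact hext ⟨hkK0, hp⟩
                  subst hi1
                  exact hPker k hkP
                · rw [hWf i hi hi1, if_neg h1] at hcf
                  exact hcf
          · show V.g i hi (X (Sum.inl k) i) = if a' (Sum.inl k) ≤ i - 1 then X (Sum.inl k) (i-1) else 0
            simp only [hX, ha', Sum.elim_inl]
            rw [dif_neg hine, dif_neg (show ¬ (i - 1 = t) by omega)]
            exact hcg
      · -- StdBasis
        intro i his hit
        by_cases hit' : i = t
        · subst hit'
          set u : {k : ι // k ∈ K0 ∧ k ∉ P} → V.V i := fun k => xt k.1 with hu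
          set wv : Fin nD → V.V i := fun l => ((dB l : ↥Dc) : V.V i) with hwv
          obtain ⟨hli1, hsp1⟩ := hB' (i - 1) (by omega) (le_refl _)
          have hjinj : Function.Injective (fun k : {k : ι // k ∈ K0 ∧ k ∉ P} =>
              (⟨k.1, (hsupp_eq k.1).2 k.2.1⟩ : {k : ι // a k ≤ i - 1 ∧ i - 1 ≤ b k})) := by
            intro k1 k2 h12
            apply Subtype.ext
            have h13 := Subtype.ext_iff.1 h12
            exact h13
          have hliu0 : LinearIndependent F
              (fun k : {k : ι // k ∈ K0 ∧ k ∉ P} => x' k.1 (i - 1)) :=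
            hli1.comp _ hjinj
          have hdisj : Disjoint (Submodule.span F
              (Set.range (fun k : {k : ι // k ∈ K0 ∧ k ∉ P} => x' k.1 (i - 1))))
              (LinearMap.ker αt) := by
            have hker : LinearMap.ker αt = Submodule.span F
                ((fun kk : {k : ι // a k ≤ i - 1 ∧ i - 1 ≤ b k} => x' kk.1 (i - 1)) ''
                  {kk | kk.1 ∈ P}) := by
              rw [← hPspan]
              congr 1
              ext v
              constructor
              · rintro ⟨k, rfl⟩
                exact ⟨⟨k.1, (hsupp_eq k.1).2 (hPsub k.2)⟩, k.2, rfl⟩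
              · rintro ⟨kk, hkk, rfl⟩
                exact ⟨⟨kk.1, hkk⟩, rfl⟩
            have hsub : Submodule.span F
                (Set.range (fun k : {k : ι // k ∈ K0 ∧ k ∉ P} => x' k.1 (i - 1)))
                ≤ Submodule.span F
                ((fun kk : {k : ι // a k ≤ i - 1 ∧ i - 1 ≤ b k} => x' kk.1 (i - 1)) ''
                  {kk | kk.1 ∉ P}) := by
              apply Submodule.span_le.2
              rintro v ⟨k, rfl⟩
              exact Submodule.subset_span ⟨⟨k.1, (hsupp_eq k.1).2 k.2.1⟩, k.2.2, rfl⟩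
            rw [hker]
            refine Disjoint.mono hsub (le_refl _) (hli1.disjoint_span_image ?_)
            rw [Set.disjoint_left]
            intro kk h1 h2
            exact h1 h2
          have hliu : LinearIndependent F u := hliu0.map hdisj
          have hspanu : Submodule.span F (Set.range u) = LinearMap.range αt := by
            apply le_antisymm
            · rw [Submodule.span_le]
              rintro v ⟨k, rfl⟩
              exact ⟨x' k.1 (i - 1), rfl⟩
            · rintro v ⟨vv, rfl⟩
              have hvv : vv ∈ Submodule.span F (Set.range
                  (fun kk : {k : ι // a k ≤ i - 1 ∧ i - 1 ≤ b k} => x' kk.1 (i - 1))) := by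
                rw [hsp1]
                trivial
              have h2 : αt vv ∈ Submodule.map αt (Submodule.span F (Set.range
                  (fun kk : {k : ι // a k ≤ i - 1 ∧ i - 1 ≤ b k} => x' kk.1 (i - 1)))) :=
                Submodule.mem_map_of_mem hvv
              rw [← Submodule.span_image] at h2
              refine Submodule.span_le.2 ?_ h2
              rintro w ⟨w', ⟨kk, rfl⟩, rfl⟩
              have hkK0 : kk.1 ∈ K0 := (hsupp_eq kk.1).1 kk.2
              show αt (x' kk.1 (i - 1)) ∈ Submodule.span F (Set.range u)
              by_cases hkP : kk.1 ∈ P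
              · rw [hPker' kk.1 hkP]
                exact Submodule.zero_mem _
              · exact Submodule.subset_span ⟨⟨kk.1, hkK0, hkP⟩, rfl⟩
          have hliw : LinearIndependent F wv :=
            dB.linearIndependent.map' Dc.subtype (Submodule.ker_subtype Dc)
          have hspanw : Submodule.span F (Set.range wv) = Dc := by
            have hr : Set.range wv = Dc.subtype '' (Set.range dB) := by
              rw [← Set.range_comp]
              rfl
            rw [hr, Submodule.span_image, dB.span_eq, Submodule.map_top, Submodule.range_subtype]
          have hdisj2 : Disjoint (Submodule.span F (Set.range u))
              (Submodule.span F (Set.range wv)) := by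
            rw [hspanu, hspanw]
            exact hDc.disjoint
          have hsum : LinearIndependent F (Sum.elim u wv) := hliu.sum_type hliw hdisj2
          have hspansum : Submodule.span F (Set.range (Sum.elim u wv)) = ⊤ := by
            rw [Set.Sum.elim_range, Submodule.span_union, hspanu, hspanw]
            exact hDc.sup_eq_top
          set eT : {k : ι // k ∈ K0 ∧ k ∉ P} ⊕ Fin nD → {k' : ι ⊕ Fin nD // a' k' ≤ i ∧ i ≤ b' k'} :=
            Sum.elim
              (fun k => ⟨Sum.inl k.1,
                ⟨le_trans (le_trans (hab k.1) (hbt1 k.1)) (by omega),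
                 le_of_eq (show (i : ℤ) = b' (Sum.inl k.1) by
                   simp only [hb', Sum.elim_inl]
                   rw [if_pos k.2])⟩⟩)
              (fun l => ⟨Sum.inr l, ⟨le_refl i, le_refl i⟩⟩) with heT
          have heTinj : Function.Injective eT := by
            intro p q hpq
            have hval := Subtype.ext_iff.1 hpq
            cases p with
            | inl k =>
              cases q with
              | inl k2 =>
                simp only [heT, Sum.elim_inl] at hval
                exact congrArg Sum.inl (Subtype.ext (Sum.inl.inj hval))
              | inr l =>
                simp only [heT, Sum.elim_inl, Sum.elim_inr] at hval
                exact absurd hval (by simp)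
            | inr l =>
              cases q with
              | inl k2 =>
                simp only [heT, Sum.elim_inl, Sum.elim_inr] at hval
                exact absurd hval (by simp)
              | inr l2 =>
                simp only [heT, Sum.elim_inr] at hval
                rw [Sum.inr.inj hval]
          have heTsurj : Function.Surjective eT := by
            rintro ⟨k', hk'⟩
            cases k' with
            | inl k =>
              have hkP : k ∈ K0 ∧ k ∉ P := by
                by_contra h
                have h2 := hk'.2
                simp only [hb', Sum.elim_inl, if_neg h] at h2
                have := hbt1 k
                omega
              exact ⟨Sum.inl ⟨k, hkP⟩, Subtype.ext rfl⟩
            | inr l => exact ⟨Sum.inr l, Subtype.ext rfl⟩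
          refine liSpanTransfer (Equiv.ofBijective eT ⟨heTinj, heTsurj⟩)
            (Sum.elim u wv) (fun k' : {k' : ι ⊕ Fin nD // a' k' ≤ i ∧ i ≤ b' k'} => X k'.1 i)
            ?_ ⟨hsum, hspansum⟩
          intro k
          cases k with
          | inl k =>
            show X (Sum.inl k.1) i = u k
            rw [hXl_t]
          | inr l =>
            show X (Sum.inr l) i = wv l
            rw [hXr_t]
        · have hile : i ≤ t - 1 := by omega
          obtain ⟨hliI, hspI⟩ := hB' i his hile
          have hbge : ∀ k : ι, a k ≤ i ∧ i ≤ b k → i ≤ b' (Sum.inl k) := by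
            intro k hk
            simp only [hb', Sum.elim_inl]
            split
            · omega
            · exact hk.2
          set eI : {k : ι // a k ≤ i ∧ i ≤ b k} → {k' : ι ⊕ Fin nD // a' k' ≤ i ∧ i ≤ b' k'} :=
            fun k => ⟨Sum.inl k.1, ⟨k.2.1, hbge k.1 k.2⟩⟩ with heI
          have heIinj : Function.Injective eI := by
            intro p q hpq
            have hval := Subtype.ext_iff.1 hpq
            simp only [heI] at hval
            exact Subtype.ext (Sum.inl.inj hval)
          have heIsurj : Function.Surjective eI := by
            rintro ⟨k', hk'⟩
            cases k' with
            | inl k =>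
              have hik : i ≤ b k := by
                have h2 := hk'.2
                by_cases hext : k ∈ K0 ∧ k ∉ P
                · have : b k = t - 1 := hK0b k hext.1
                  omega
                · simp only [hb', Sum.elim_inl, if_neg hext] at h2
                  exact h2
              exact ⟨⟨k, hk'.1, hik⟩, Subtype.ext rfl⟩
            | inr l =>
              exfalso
              have h1 : t ≤ i := hk'.1
              omega
          refine liSpanTransfer (Equiv.ofBijective eI ⟨heIinj, heIsurj⟩)
            (fun k : {k : ι // a k ≤ i ∧ i ≤ b k} => x' k.1 i)
            (fun k' : {k' : ι ⊕ Fin nD // a' k' ≤ i ∧ i ≤ b' k'} => X k'.1 i)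
            ?_ ⟨hliI, hspI⟩
          intro k
          show X (Sum.inl k.1) i = x' k.1 i
          exact hXl_lt k.1 i (by omega)

end Main

section Final
open Zigzag
variable {F : Type} [Field F]

lemma toE_le_toE {x y : ℤ} : toE x ≤ toE y ↔ x ≤ y := by
  unfold toE
  rw [WithBot.coe_le_coe, WithTop.coe_le_coe]

lemma memI_toE {aa bb i : ℤ} : memI (toE aa) (toE bb) i ↔ aa ≤ i ∧ i ≤ bb := by
  unfold memI
  rw [toE_le_toE, toE_le_toE]

lemma subsingleton_fun {α β : Type} (h : IsEmpty α) : Subsingleton (α → β) :=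
  ⟨fun f g => funext fun x => h.elim x⟩

lemma subsingleton_prod {α β : Type} (ha : Subsingleton α) (hb : Subsingleton β) :
    Subsingleton (α × β) :=
  ⟨fun p q => Prod.ext (ha.allEq _ _) (hb.allEq _ _)⟩

/-- Project to the first factor when the second is trivial. -/
noncomputable def prodFstEquiv (M N : Type) [AddCommGroup M] [Module F M] [AddCommGroup N]
    [Module F N] (hN : Subsingleton N) : (M × N) ≃ₗ[F] M where
  toFun p := p.1
  map_add' _ _ := rfl
  map_smul' _ _ := rfl
  invFun m := (m, 0)
  left_inv p := Prod.ext rfl (hN.allEq _ _)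
  right_inv m := rfl

variable {ι : Type}

/-- Monomial restriction map between coordinate spaces. -/
noncomputable def restrF (a b : ι → ℤ) (i j : ℤ) :
    ({k : ι // a k ≤ i ∧ i ≤ b k} → F) →ₗ[F] ({k : ι // a k ≤ j ∧ j ≤ b k} → F) where
  toFun c k := if h : a k.1 ≤ i ∧ i ≤ b k.1 then c ⟨k.1, h⟩ else 0
  map_add' c d := by
    funext k
    by_cases h : a k.1 ≤ i ∧ i ≤ b k.1
    · simp [h]
    · simp [h]
  map_smul' m c := by
    funext k
    by_cases h : a k.1 ≤ i ∧ i ≤ b k.1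
    · simp [h]
    · simp [h]

/-- Monomial restriction map between coordinate spaces restricted to a predicate. -/
noncomputable def restrMap (a b : ι → ℤ) (p : ι → Prop) (i j : ℤ) :
    ({k : ι // p k ∧ a k ≤ i ∧ i ≤ b k} → F) →ₗ[F] ({k : ι // p k ∧ a k ≤ j ∧ j ≤ b k} → F) where
  toFun c k := if h : a k.1 ≤ i ∧ i ≤ b k.1 then c ⟨k.1, k.2.1, h⟩ else 0
  map_add' c d := by
    funext k
    by_cases h : a k.1 ≤ i ∧ i ≤ b k.1
    · simp [h]
    · simp [h]
  map_smul' m c := by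
    funext k
    by_cases h : a k.1 ≤ i ∧ i ≤ b k.1
    · simp [h]
    · simp [h]

/-- The coordinate zigzag module on the thin intervals selected by `p`. -/
noncomputable def coordZ (F : Type) [Field F] {ι : Type} (a b : ι → ℤ) (p : ι → Prop) :
    Zigzag F where
  V i := {k : ι // p k ∧ a k ≤ i ∧ i ≤ b k} → F
  acg i := inferInstance
  mod i := inferInstance
  f i _ := restrMap a b p i (i + 1)
  g i _ := restrMap a b p i (i - 1)

/-- Split coordinates into the `k0` coordinate (as interval-module fiber) and the rest. -/
noncomputable def splitEquiv [DecidableEq ι] (a b : ι → ℤ) (k0 : ι) (i : ℤ) :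
    ({k : ι // a k ≤ i ∧ i ≤ b k} → F) ≃ₗ[F]
      ((PLift (memI (toE (a k0)) (toE (b k0)) i) → F) ×
        ({k : ι // k ≠ k0 ∧ a k ≤ i ∧ i ≤ b k} → F)) where
  toFun c := (fun q => c ⟨k0, memI_toE.1 q.down⟩, fun k => c ⟨k.1, k.2.2⟩)
  map_add' c d := rfl
  map_smul' m c := rfl
  invFun z k := if h : k.1 = k0 then z.1 ⟨memI_toE.2 (h ▸ k.2)⟩ else z.2 ⟨k.1, h, k.2⟩
  left_inv c := by
    funext k
    by_cases h : k.1 = k0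
    · show (if h : k.1 = k0 then _ else _) = c k
      rw [dif_pos h]
      exact congrArg c (Subtype.ext h.symm)
    · show (if h : k.1 = k0 then _ else _) = c k
      rw [dif_neg h]
  right_inv z := by
    refine Prod.ext ?_ ?_
    · funext q
      show (if h : (k0 : ι) = k0 then _ else _) = z.1 q
      rw [dif_pos rfl]
    · funext k
      show (if h : k.1 = k0 then _ else _) = z.2 k
      rw [dif_neg k.2.1]

lemma split_commf [DecidableEq ι] (a b : ι → ℤ) (k0 : ι) (i : ℤ) (hi : Even i)
    (c : {k : ι // a k ≤ i ∧ i ≤ b k} → F) :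
    splitEquiv a b k0 (i+1) (restrF a b i (i+1) c)
      = ((interval F (toE (a k0)) (toE (b k0))).dsum
          (coordZ F a b (fun k => k ≠ k0))).f i hi (splitEquiv a b k0 i c) := by
  refine Prod.ext ?_ ?_
  · funext q
    by_cases hc : a k0 ≤ i ∧ i ≤ b k0
    · have hL : (splitEquiv (F := F) a b k0 (i+1) (restrF a b i (i+1) c)).1 q = c ⟨k0, hc⟩ := by
        show (if h : a k0 ≤ i ∧ i ≤ b k0 then c ⟨k0, h⟩ else 0) = c ⟨k0, hc⟩
        rw [dif_pos hc]
      have hR : (((interval F (toE (a k0)) (toE (b k0))).dsum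
          (coordZ F a b (fun k => k ≠ k0))).f i hi (splitEquiv a b k0 i c)).1 q
          = c ⟨k0, hc⟩ := by
        show (letI := Classical.dec (memI (toE (a k0)) (toE (b k0)) i);
          if hp : memI (toE (a k0)) (toE (b k0)) i then c ⟨k0, memI_toE.1 hp⟩ else 0)
          = c ⟨k0, hc⟩
        rw [dif_pos (memI_toE.2 hc)]
      rw [hL, hR]
    · have hL : (splitEquiv (F := F) a b k0 (i+1) (restrF a b i (i+1) c)).1 q = (0 : F) := by
        show (if h : a k0 ≤ i ∧ i ≤ b k0 then c ⟨k0, h⟩ else 0) = 0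
        rw [dif_neg hc]
      have hR : (((interval F (toE (a k0)) (toE (b k0))).dsum
          (coordZ F a b (fun k => k ≠ k0))).f i hi (splitEquiv a b k0 i c)).1 q
          = (0 : F) := by
        show (letI := Classical.dec (memI (toE (a k0)) (toE (b k0)) i);
          if hp : memI (toE (a k0)) (toE (b k0)) i then c ⟨k0, memI_toE.1 hp⟩ else 0)
          = (0 : F)
        rw [dif_neg (fun hp => hc (memI_toE.1 hp))]
      rw [hL, hR]
  · funext k
    show (if h : a k.1 ≤ i ∧ i ≤ b k.1 then c ⟨k.1, h⟩ else 0)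
      = (if h : a k.1 ≤ i ∧ i ≤ b k.1 then c ⟨k.1, h⟩ else 0)
    rfl

lemma split_commg [DecidableEq ι] (a b : ι → ℤ) (k0 : ι) (i : ℤ) (hi : Even i)
    (c : {k : ι // a k ≤ i ∧ i ≤ b k} → F) :
    splitEquiv a b k0 (i-1) (restrF a b i (i-1) c)
      = ((interval F (toE (a k0)) (toE (b k0))).dsum
          (coordZ F a b (fun k => k ≠ k0))).g i hi (splitEquiv a b k0 i c) := by
  refine Prod.ext ?_ ?_
  · funext q
    by_cases hc : a k0 ≤ i ∧ i ≤ b k0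
    · have hL : (splitEquiv (F := F) a b k0 (i-1) (restrF a b i (i-1) c)).1 q = c ⟨k0, hc⟩ := by
        show (if h : a k0 ≤ i ∧ i ≤ b k0 then c ⟨k0, h⟩ else 0) = c ⟨k0, hc⟩
        rw [dif_pos hc]
      have hR : (((interval F (toE (a k0)) (toE (b k0))).dsum
          (coordZ F a b (fun k => k ≠ k0))).g i hi (splitEquiv a b k0 i c)).1 q
          = c ⟨k0, hc⟩ := by
        show (letI := Classical.dec (memI (toE (a k0)) (toE (b k0)) i);
          if hp : memI (toE (a k0)) (toE (b k0)) i then c ⟨k0, memI_toE.1 hp⟩ else 0)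
          = c ⟨k0, hc⟩
        rw [dif_pos (memI_toE.2 hc)]
      rw [hL, hR]
    · have hL : (splitEquiv (F := F) a b k0 (i-1) (restrF a b i (i-1) c)).1 q = (0 : F) := by
        show (if h : a k0 ≤ i ∧ i ≤ b k0 then c ⟨k0, h⟩ else 0) = 0
        rw [dif_neg hc]
      have hR : (((interval F (toE (a k0)) (toE (b k0))).dsum
          (coordZ F a b (fun k => k ≠ k0))).g i hi (splitEquiv a b k0 i c)).1 q
          = (0 : F) := by
        show (letI := Classical.dec (memI (toE (a k0)) (toE (b k0)) i);
          if hp : memI (toE (a k0)) (toE (b k0)) i then c ⟨k0, memI_toE.1 hp⟩ else 0)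
          = (0 : F)
        rw [dif_neg (fun hp => hc (memI_toE.1 hp))]
      rw [hL, hR]
  · funext k
    show (if h : a k.1 ≤ i ∧ i ≤ b k.1 then c ⟨k.1, h⟩ else 0)
      = (if h : a k.1 ≤ i ∧ i ≤ b k.1 then c ⟨k.1, h⟩ else 0)
    rfl

end Final

set_option maxHeartbeats 1000000 in
open Zigzag in
/-- every indecomposable finite zigzag persistence module (supported on
`[s,t]`) is isomorphic to an interval module `I^[a,b]` with `s ≤ a ≤ b ≤ t`. -/
theorem stmt16 (F : Type) [Field F] (s t : ℤ) (hst : s ≤ t) (V : Zigzag F)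
    (hfd : ∀ i, FiniteDimensional F (V.V i))
    (hsupp : ∀ i, (i < s ∨ t < i) → ∀ x : V.V i, x = 0)
    (hV : V.Indecomposable) :
    ∃ a b : ℤ, s ≤ a ∧ a ≤ b ∧ b ≤ t ∧
      Nonempty (Iso V (interval F (toE a) (toE b))) := by
  classical
  obtain ⟨hVnz, hVdec⟩ := hV
  have hEf : ∀ (h : Even t) (v : V.V t), V.f t h v = 0 := fun h v => hsupp (t+1) (by omega) _
  have hEg : ∀ (h : Even s) (v : V.V s), V.g s h v = 0 := fun h v => hsupp (s-1) (by omega) _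
  obtain ⟨ι, hfin, hdec, a, b, x, has, hab, hbt, hm, hB⟩ :=
    stdMain (t - s).toNat s t hst (by omega) V hfd hEf hEg
  haveI := hfin
  haveI := hdec
  have hι : Nonempty ι := by
    by_contra hno
    haveI : IsEmpty ι := not_nonempty_iff.1 hno
    apply hVnz
    intro i v
    by_cases hin : s ≤ i ∧ i ≤ t
    · have hsp := (hB i hin.1 hin.2).2
      rw [Set.range_eq_empty, Submodule.span_empty] at hsp
      have hv : v ∈ (⊥ : Submodule F (V.V i)) := by
        rw [hsp]
        trivial
      simpa using hv
    · exact hsupp i (by omega) v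
  obtain ⟨k0⟩ := hι
  set Bs : ∀ i, s ≤ i → i ≤ t → Module.Basis {k : ι // a k ≤ i ∧ i ≤ b k} F (V.V i) :=
    fun i h1 h2 => Module.Basis.mk (hB i h1 h2).1 (hB i h1 h2).2.ge with hBsdef
  have hBsapp : ∀ i h1 h2 j, Bs i h1 h2 j = x j.1 i := by
    intro i h1 h2 j
    rw [hBsdef]
    exact Module.Basis.mk_apply _ _ _
  have hRF : ∀ (i j : ℤ) (cc : {k : ι // a k ≤ i ∧ i ≤ b k} → F)
      (k : {k : ι // a k ≤ j ∧ j ≤ b k}),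
      restrF (F := F) a b i j cc k = if h : a k.1 ≤ i ∧ i ≤ b k.1 then cc ⟨k.1, h⟩ else 0 :=
    fun _ _ _ _ => rfl
  have hEcf : ∀ (i : ℤ) (hi : Even i) (h1 : s ≤ i) (h1' : i ≤ t) (h2 : s ≤ i + 1)
      (h2' : i + 1 ≤ t) (v : V.V i),
      (Bs (i+1) h2 h2').equivFun (V.f i hi v)
        = restrF a b i (i+1) ((Bs i h1 h1').equivFun v) := by
    intro i hi h1 h1' h2 h2' v
    have hmaps : ((Bs (i+1) h2 h2').equivFun.toLinearMap).comp (V.f i hi)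
        = (restrF a b i (i+1)).comp ((Bs i h1 h1').equivFun.toLinearMap) := by
      apply Module.Basis.ext (Bs i h1 h1')
      intro j
      rw [LinearMap.comp_apply, LinearMap.comp_apply, LinearEquiv.coe_coe, LinearEquiv.coe_coe]
      have hL : V.f i hi ((Bs i h1 h1') j) = if i + 1 ≤ b j.1 then x j.1 (i+1) else 0 := by
        rw [hBsapp i h1 h1' j]
        exact (hm j.1 i hi j.2.1 j.2.2).1
      rw [hL]
      by_cases hb1 : i + 1 ≤ b j.1
      · have hj1 : a j.1 ≤ i + 1 ∧ i + 1 ≤ b j.1 := ⟨by have := j.2.1; omega, hb1⟩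
        rw [if_pos hb1, ← hBsapp (i+1) h2 h2' ⟨j.1, hj1⟩]
        funext k
        rw [hRF, Module.Basis.equivFun_self]
        by_cases hk : a k.1 ≤ i ∧ i ≤ b k.1
        · rw [dif_pos hk, Module.Basis.equivFun_self]
          by_cases hkj : k.1 = j.1
          · have e1 : (⟨j.1, hj1⟩ : {k : ι // a k ≤ i + 1 ∧ i + 1 ≤ b k}) = k := Subtype.ext hkj.symm
            have e2 : j = (⟨k.1, hk⟩ : {k : ι // a k ≤ i ∧ i ≤ b k}) := Subtype.ext hkj.symm
            rw [if_pos e1, if_pos e2]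
          · have e1 : ¬ ((⟨j.1, hj1⟩ : {k : ι // a k ≤ i + 1 ∧ i + 1 ≤ b k}) = k) :=
              fun hh => hkj (congrArg Subtype.val hh).symm
            have e2 : ¬ (j = (⟨k.1, hk⟩ : {k : ι // a k ≤ i ∧ i ≤ b k})) :=
              fun hh => hkj (congrArg Subtype.val hh).symm
            rw [if_neg e1, if_neg e2]
        · have e1 : ¬ ((⟨j.1, hj1⟩ : {k : ι // a k ≤ i + 1 ∧ i + 1 ≤ b k}) = k) := by
            intro hh
            have h5 : j.1 = k.1 := congrArg Subtype.val hh
            exact hk ⟨h5 ▸ j.2.1, h5 ▸ j.2.2⟩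
          rw [dif_neg hk, if_neg e1]
      · rw [if_neg hb1, map_zero]
        funext k
        rw [hRF]
        by_cases hk : a k.1 ≤ i ∧ i ≤ b k.1
        · have e2 : ¬ (j = (⟨k.1, hk⟩ : {k : ι // a k ≤ i ∧ i ≤ b k})) := by
            intro hh
            have h5 : j.1 = k.1 := congrArg Subtype.val hh
            apply hb1
            rw [h5]
            exact k.2.2
          rw [dif_pos hk, Module.Basis.equivFun_self, if_neg e2]
          rfl
        · rw [dif_neg hk]
          rfl
    exact LinearMap.congr_fun hmaps v
  have hEcg : ∀ (i : ℤ) (hi : Even i) (h1 : s ≤ i) (h1' : i ≤ t) (h2 : s ≤ i - 1)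
      (h2' : i - 1 ≤ t) (v : V.V i),
      (Bs (i-1) h2 h2').equivFun (V.g i hi v)
        = restrF a b i (i-1) ((Bs i h1 h1').equivFun v) := by
    intro i hi h1 h1' h2 h2' v
    have hmaps : ((Bs (i-1) h2 h2').equivFun.toLinearMap).comp (V.g i hi)
        = (restrF a b i (i-1)).comp ((Bs i h1 h1').equivFun.toLinearMap) := by
      apply Module.Basis.ext (Bs i h1 h1')
      intro j
      rw [LinearMap.comp_apply, LinearMap.comp_apply, LinearEquiv.coe_coe, LinearEquiv.coe_coe]
      have hL : V.g i hi ((Bs i h1 h1') j) = if a j.1 ≤ i - 1 then x j.1 (i-1) else 0 := by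
        rw [hBsapp i h1 h1' j]
        exact (hm j.1 i hi j.2.1 j.2.2).2
      rw [hL]
      by_cases hb1 : a j.1 ≤ i - 1
      · have hj1 : a j.1 ≤ i - 1 ∧ i - 1 ≤ b j.1 := ⟨hb1, by have := j.2.2; omega⟩
        rw [if_pos hb1, ← hBsapp (i-1) h2 h2' ⟨j.1, hj1⟩]
        funext k
        rw [hRF, Module.Basis.equivFun_self]
        by_cases hk : a k.1 ≤ i ∧ i ≤ b k.1
        · rw [dif_pos hk, Module.Basis.equivFun_self]
          by_cases hkj : k.1 = j.1
          · have e1 : (⟨j.1, hj1⟩ : {k : ι // a k ≤ i - 1 ∧ i - 1 ≤ b k}) = k := Subtype.ext hkj.symm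
            have e2 : j = (⟨k.1, hk⟩ : {k : ι // a k ≤ i ∧ i ≤ b k}) := Subtype.ext hkj.symm
            rw [if_pos e1, if_pos e2]
          · have e1 : ¬ ((⟨j.1, hj1⟩ : {k : ι // a k ≤ i - 1 ∧ i - 1 ≤ b k}) = k) :=
              fun hh => hkj (congrArg Subtype.val hh).symm
            have e2 : ¬ (j = (⟨k.1, hk⟩ : {k : ι // a k ≤ i ∧ i ≤ b k})) :=
              fun hh => hkj (congrArg Subtype.val hh).symm
            rw [if_neg e1, if_neg e2]
        · have e1 : ¬ ((⟨j.1, hj1⟩ : {k : ι // a k ≤ i - 1 ∧ i - 1 ≤ b k}) = k) := by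
            intro hh
            have h5 : j.1 = k.1 := congrArg Subtype.val hh
            exact hk ⟨h5 ▸ j.2.1, h5 ▸ j.2.2⟩
          rw [dif_neg hk, if_neg e1]
      · rw [if_neg hb1, map_zero]
        funext k
        rw [hRF]
        by_cases hk : a k.1 ≤ i ∧ i ≤ b k.1
        · have e2 : ¬ (j = (⟨k.1, hk⟩ : {k : ι // a k ≤ i ∧ i ≤ b k})) := by
            intro hh
            have h5 : j.1 = k.1 := congrArg Subtype.val hh
            apply hb1
            rw [h5]
            exact k.2.1
          rw [dif_pos hk, Module.Basis.equivFun_self, if_neg e2]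
          rfl
        · rw [dif_neg hk]
          rfl
    exact LinearMap.congr_fun hmaps v
  have hUsub : ∀ j : ℤ, ¬(a k0 ≤ j ∧ j ≤ b k0) →
      Subsingleton ((interval F (toE (a k0)) (toE (b k0))).V j) :=
    fun j hj => subsingleton_fun ⟨fun q => hj (memI_toE.1 q.down)⟩
  have hWsub : ∀ j : ℤ, (j < s ∨ t < j) →
      Subsingleton ((coordZ F a b (fun k => k ≠ k0)).V j) := by
    intro j hj
    refine subsingleton_fun ⟨fun k => ?_⟩
    have h1 := has k.1
    have h2 := hbt k.1
    have h3 := k.2.2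
    omega
  have hVsub : ∀ j : ℤ, (j < s ∨ t < j) → Subsingleton (V.V j) :=
    fun j hj => ⟨fun u v => by rw [hsupp j hj u, hsupp j hj v]⟩
  set e : ∀ i : ℤ, V.V i ≃ₗ[F]
      ((interval F (toE (a k0)) (toE (b k0))).dsum (coordZ F a b (fun k => k ≠ k0))).V i :=
    fun i =>
      if h : s ≤ i ∧ i ≤ t then
        ((Bs i h.1 h.2).equivFun).trans (splitEquiv a b k0 i)
      else
        letI hv : Subsingleton (V.V i) := hVsub i (by omega)
        letI hd : Subsingleton (((interval F (toE (a k0)) (toE (b k0))).dsum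
            (coordZ F a b (fun k => k ≠ k0))).V i) :=
          subsingleton_prod
            (hUsub i (by have u1 := has k0; have u2 := hbt k0; have u3 := hab k0; omega))
            (hWsub i (by omega))
        trivEquiv
    with hedef
  have hcf : ∀ (i : ℤ) (hi : Even i) (xv : V.V i),
      e (i+1) (V.f i hi xv)
        = ((interval F (toE (a k0)) (toE (b k0))).dsum
            (coordZ F a b (fun k => k ≠ k0))).f i hi (e i xv) := by
    intro i hi xv
    by_cases h2 : s ≤ i + 1 ∧ i + 1 ≤ t
    · by_cases h1 : s ≤ i ∧ i ≤ t
      · simp only [hedef]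
        rw [dif_pos h2, dif_pos h1]
        change splitEquiv a b k0 (i+1) ((Bs (i+1) h2.1 h2.2).equivFun (V.f i hi xv)) = _
        rw [hEcf i hi h1.1 h1.2 h2.1 h2.2 xv]
        exact split_commf a b k0 i hi _
      · have hx0 : xv = 0 := hsupp i (by omega) xv
        rw [hx0]
        simp only [map_zero]
    · have hss : Subsingleton (((interval F (toE (a k0)) (toE (b k0))).dsum
          (coordZ F a b (fun k => k ≠ k0))).V (i+1)) :=
        subsingleton_prod
          (hUsub (i+1) (by have u1 := has k0; have u2 := hbt k0; have u3 := hab k0; omega))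
          (hWsub (i+1) (by omega))
      exact hss.allEq _ _
  have hcg : ∀ (i : ℤ) (hi : Even i) (xv : V.V i),
      e (i-1) (V.g i hi xv)
        = ((interval F (toE (a k0)) (toE (b k0))).dsum
            (coordZ F a b (fun k => k ≠ k0))).g i hi (e i xv) := by
    intro i hi xv
    by_cases h2 : s ≤ i - 1 ∧ i - 1 ≤ t
    · by_cases h1 : s ≤ i ∧ i ≤ t
      · simp only [hedef]
        rw [dif_pos h2, dif_pos h1]
        change splitEquiv a b k0 (i-1) ((Bs (i-1) h2.1 h2.2).equivFun (V.g i hi xv)) = _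
        rw [hEcg i hi h1.1 h1.2 h2.1 h2.2 xv]
        exact split_commg a b k0 i hi _
      · have hx0 : xv = 0 := hsupp i (by omega) xv
        rw [hx0]
        simp only [map_zero]
    · have hss : Subsingleton (((interval F (toE (a k0)) (toE (b k0))).dsum
          (coordZ F a b (fun k => k ≠ k0))).V (i-1)) :=
        subsingleton_prod
          (hUsub (i-1) (by have u1 := has k0; have u2 := hbt k0; have u3 := hab k0; omega))
          (hWsub (i-1) (by omega))
      exact hss.allEq _ _
  have iso1 : Iso V ((interval F (toE (a k0)) (toE (b k0))).dsum
      (coordZ F a b (fun k => k ≠ k0))) := ⟨e, hcf, hcg⟩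
  rcases hVdec _ _ iso1 with hU0 | hW0
  · exfalso
    have hmem : memI (toE (a k0)) (toE (b k0)) (a k0) := memI_toE.2 ⟨le_refl _, hab k0⟩
    have h1 := hU0 (a k0) (fun _ => (1 : F))
    have h2 := congrFun h1 ⟨hmem⟩
    exact one_ne_zero h2
  · have hone : ∀ j : ι, j = k0 := by
      intro j
      by_contra hj
      have h1 := hW0 (a j) (fun _ => (1 : F))
      have h2 := congrFun h1 ⟨j, hj, le_refl _, hab j⟩
      exact one_ne_zero h2
    refine ⟨a k0, b k0, has k0, hab k0, hbt k0, ⟨?_⟩⟩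
    have hWall : ∀ i : ℤ, Subsingleton ((coordZ F a b (fun k => k ≠ k0)).V i) :=
      fun i => subsingleton_fun ⟨fun k => (k.2.1 (hone k.1)).elim⟩
    refine ⟨fun i => (e i).trans (prodFstEquiv _ _ (hWall i)), ?_, ?_⟩
    · intro i h xv
      show (e (i+1) (V.f i h xv)).1
        = (interval F (toE (a k0)) (toE (b k0))).f i h ((e i xv).1)
      have h1 := hcf i h xv
      have h2 := congrArg Prod.fst h1
      rw [show ((interval F (toE (a k0)) (toE (b k0))).dsum
            (coordZ F a b (fun k => k ≠ k0))).f i h (e i xv)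
          = ((interval F (toE (a k0)) (toE (b k0))).f i h ((e i xv).1),
             (coordZ F a b (fun k => k ≠ k0)).f i h ((e i xv).2))
          from LinearMap.prodMap_apply _ _ _] at h2
      exact h2
    · intro i h xv
      show (e (i-1) (V.g i h xv)).1
        = (interval F (toE (a k0)) (toE (b k0))).g i h ((e i xv).1)
      have h1 := hcg i h xv
      have h2 := congrArg Prod.fst h1
      rw [show ((interval F (toE (a k0)) (toE (b k0))).dsum
            (coordZ F a b (fun k => k ≠ k0))).g i h (e i xv)
          = ((interval F (toE (a k0)) (toE (b k0))).g i h ((e i xv).1),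
             (coordZ F a b (fun k => k ≠ k0)).g i h ((e i xv).2))
          from LinearMap.prodMap_apply _ _ _] at h2
      exact h2
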